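/- arXiv:1409.3665 — 4 statements merged into one kernel-verified Lean document; each statement's English description precedes it below -/
import Mathlib

section
/- For finite random variables A, B, the pair (1,1) belongs to the hypercontractivity ribbon 𝔯(A,B) if and only if A and B are independent. -/
open Finset

noncomputable def ent {α : Type*} [Fintype α] (p : α → ℝ) : ℝ :=
  -∑ x, p x * Real.log (p x)

noncomputable def mutInfo {α β : Type*} [Fintype α] [Fintype β] (p : α → β → ℝ) : ℝ :=
  ent (fun a => ∑ b, p a b) + ent (fun b => ∑ a, p a b)
    - ent (fun x : α × β => p x.1 x.2)

/-- `p` is a probability distribution on `α × β`. -/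
def IsDist {α β : Type*} [Fintype α] [Fintype β] (p : α → β → ℝ) : Prop :=
  (∀ a b, 0 ≤ p a b) ∧ (∑ a, ∑ b, p a b) = 1

/-- `(l1, l2)` belongs to the hypercontractivity ribbon of `p`:
for every auxiliary finite random variable `U` (given by a joint distribution `q`
on `γ × α × β` whose `(α, β)`-marginal is `p`),
`l1 * I(U;A) + l2 * I(U;B) ≤ I(U;AB)`. -/
def memHC {α β : Type*} [Fintype α] [Fintype β] (p : α → β → ℝ) (l1 l2 : ℝ) : Prop :=
  0 ≤ l1 ∧ 0 ≤ l2 ∧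
  ∀ (γ : Type) [Fintype γ], ∀ q : γ → α → β → ℝ,
    (∀ u a b, 0 ≤ q u a b) →
    (∀ a b, (∑ u, q u a b) = p a b) →
    l1 * mutInfo (fun u a => ∑ b, q u a b) + l2 * mutInfo (fun u b => ∑ a, q u a b)
      ≤ mutInfo (fun u (x : α × β) => q u x.1 x.2)

lemma mutInfo_eq {γ δ : Type*} [Fintype γ] [Fintype δ] (r : γ → δ → ℝ) :
    mutInfo r = ∑ c, ∑ d, r c d *
      (Real.log (r c d) - Real.log (∑ d', r c d') - Real.log (∑ c', r c' d)) := by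
  unfold mutInfo ent
  rw [Fintype.sum_prod_type]
  simp only [mul_sub, Finset.sum_sub_distrib]
  have h1 : ∑ c, ∑ d, r c d * Real.log (∑ d', r c d')
      = ∑ c, (∑ d, r c d) * Real.log (∑ d', r c d') := by
    refine sum_congr rfl fun c _ => ?_
    rw [Finset.sum_mul]
  have h2 : ∑ c, ∑ d, r c d * Real.log (∑ c', r c' d)
      = ∑ d, (∑ c, r c d) * Real.log (∑ c', r c' d) := by
    rw [Finset.sum_comm]
    refine sum_congr rfl fun d _ => ?_
    rw [Finset.sum_mul]
  rw [h1, h2]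
  ring

lemma key_ineq (x y : ℝ) (hx : 0 ≤ x) (hy : 0 ≤ y) (h : y = 0 → x = 0) :
    x - y ≤ x * Real.log (x / y) := by
  rcases hx.eq_or_lt with h0 | hx0
  · simp [← h0]; linarith
  · have hy0 : 0 < y := lt_of_le_of_ne hy (fun hh => by have := h hh.symm; linarith)
    have hlog : Real.log (y / x) ≤ y / x - 1 := Real.log_le_sub_one_of_pos (div_pos hy0 hx0)
    have hneg : Real.log (x / y) = - Real.log (y / x) := by
      rw [← Real.log_inv]; congr 1; field_simp
    have hxy : x * (y / x) = y := by field_simp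
    rw [hneg]
    nlinarith [mul_le_mul_of_nonneg_left hlog hx0.le]

lemma key_eq (x y : ℝ) (hx : 0 ≤ x) (hy : 0 ≤ y) (h : y = 0 → x = 0)
    (he : x * Real.log (x / y) = x - y) : x = y := by
  rcases hx.eq_or_lt with h0 | hx0
  · rw [← h0] at he ⊢; simp at he; linarith
  · have hy0 : 0 < y := lt_of_le_of_ne hy (fun hh => by have := h hh.symm; linarith)
    by_contra hne
    have hne1 : y / x ≠ 1 := by
      intro hh; apply hne; field_simp at hh; linarith
    have hlog : Real.log (y / x) < y / x - 1 := Real.log_lt_sub_one_of_pos (div_pos hy0 hx0) hne1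
    have hneg : Real.log (x / y) = - Real.log (y / x) := by
      rw [← Real.log_inv]; congr 1; field_simp
    have hxy : x * (y / x) = y := by field_simp
    rw [hneg] at he
    nlinarith [mul_lt_mul_of_pos_left hlog hx0]

lemma mutInfo_push {δ ε : Type*} [Fintype δ] [Fintype ε] [DecidableEq ε] (φ : δ → ε) (f : δ → ℝ) :
    mutInfo (fun c e => if φ c = e then f c else 0)
      = ent (fun e => ∑ c, if φ c = e then f c else 0) := by
  unfold mutInfo
  have h1 : (fun c => ∑ e, if φ c = e then f c else 0) = f := by
    funext c; simp
  have h3 : ent (fun x : δ × ε => if φ x.1 = x.2 then f x.1 else 0) = ent f := by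
    unfold ent
    congr 1
    rw [Fintype.sum_prod_type]
    refine sum_congr rfl fun c _ => ?_
    rw [Finset.sum_eq_single (φ c)]
    · simp
    · intro e _ he; simp [Ne.symm he]
    · simp
  rw [h1, h3]
  ring



/-- `(1,1)` belongs to the hypercontractivity ribbon of `p` iff `A` and `B`
are independent, i.e. `p` factors as the product of its marginals. -/
theorem hc_ribbon_one_one_iff_indep {α β : Type} [Fintype α] [Fintype β]
    (p : α → β → ℝ) (hp : IsDist p) :
    memHC p 1 1 ↔ ∀ a b, p a b = (∑ b', p a b') * (∑ a', p a' b) := by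
  constructor
  · rintro ⟨-, -, hI⟩
    classical
    set q : (α × β) → α → β → ℝ := fun c a b => if c = (a, b) then p a b else 0 with hqdef
    have hq0 : ∀ u a b, 0 ≤ q u a b := by
      intro u a b; rw [hqdef]; dsimp only; split
      · exact hp.1 a b
      · exact le_refl 0
    have hqm : ∀ a b, (∑ u, q u a b) = p a b := by
      intro a b; rw [hqdef]; simp
    have h1 := hI (α × β) q hq0 hqm
    have hA : (fun (c : α × β) a => ∑ b, q c a b)
        = fun c a => if c.1 = a then p c.1 c.2 else 0 := by
      funext c a
      obtain ⟨c1, c2⟩ := c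
      simp only [hqdef, Prod.mk.injEq, ite_and]
      by_cases h : c1 = a
      · subst h; simp [Finset.sum_ite_eq]
      · simp [h]
    have hB : (fun (c : α × β) b => ∑ a, q c a b)
        = fun c b => if c.2 = b then p c.1 c.2 else 0 := by
      funext c b
      obtain ⟨c1, c2⟩ := c
      simp only [hqdef, Prod.mk.injEq, ite_and]
      by_cases h : c2 = b
      · subst h; simp [Finset.sum_ite_eq]
      · simp [h]
    have hJ : (fun (c : α × β) (x : α × β) => q c x.1 x.2)
        = fun c x => if c = x then p c.1 c.2 else 0 := by
      funext c x
      rw [hqdef]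
      dsimp only
      rw [Prod.mk.eta]
      split_ifs with h
      · rw [h]
      · rfl
    have hentA : mutInfo (fun (c : α × β) a => ∑ b, q c a b)
        = ent (fun a => ∑ b', p a b') := by
      rw [hA, mutInfo_push (fun c : α × β => c.1) (fun c => p c.1 c.2)]
      congr 1
      funext a
      rw [Fintype.sum_prod_type]
      rw [Finset.sum_eq_single a]
      · simp
      · intro c1 _ h; simp [h]
      · simp
    have hentB : mutInfo (fun (c : α × β) b => ∑ a, q c a b)
        = ent (fun b => ∑ a', p a' b) := by
      rw [hB, mutInfo_push (fun c : α × β => c.2) (fun c => p c.1 c.2)]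
      congr 1
      funext b
      rw [Fintype.sum_prod_type]
      rw [show (∑ c1, ∑ c2, if c2 = b then p c1 c2 else 0) = ∑ c1, p c1 b from
        sum_congr rfl fun c1 _ => by
          rw [Finset.sum_eq_single b]
          · simp
          · intro c2 _ h; simp [h]
          · simp]
    have hentJ : mutInfo (fun (c : α × β) (x : α × β) => q c x.1 x.2)
        = ent (fun x : α × β => p x.1 x.2) := by
      rw [hJ, mutInfo_push (fun c : α × β => c) (fun c => p c.1 c.2)]
      congr 1
      funext x
      rw [Finset.sum_eq_single x]
      · simp
      · intro c _ h; simp [h]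
      · simp
    rw [hentA, hentB, hentJ, one_mul, one_mul] at h1
    -- so mutInfo p ≤ 0
    have hmle : mutInfo p ≤ 0 := by
      unfold mutInfo
      linarith
    -- now the KL lower bound
    have hterm : ∀ a b, p a b * (Real.log (p a b) - Real.log (∑ b', p a b')
          - Real.log (∑ a', p a' b))
        = p a b * Real.log (p a b / ((∑ b', p a b') * (∑ a', p a' b))) := by
      intro a b
      rcases (hp.1 a b).eq_or_lt with h0 | h0
      · rw [← h0]; ring
      · have hpA : 0 < ∑ b', p a b' :=
          lt_of_lt_of_le h0 (Finset.single_le_sum (fun i _ => hp.1 a i) (mem_univ b))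
        have hpB : 0 < ∑ a', p a' b :=
          lt_of_lt_of_le h0 (Finset.single_le_sum (fun i _ => hp.1 i b) (mem_univ a))
        rw [Real.log_div h0.ne' (mul_pos hpA hpB).ne', Real.log_mul hpA.ne' hpB.ne']
        ring
    have hSle : ∑ a, ∑ b, p a b * Real.log (p a b / ((∑ b', p a b') * (∑ a', p a' b))) ≤ 0 := by
      calc ∑ a, ∑ b, p a b * Real.log (p a b / ((∑ b', p a b') * (∑ a', p a' b)))
          = mutInfo p := by
            rw [mutInfo_eq]
            exact sum_congr rfl fun a _ => sum_congr rfl fun b _ => (hterm a b).symm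
        _ ≤ 0 := hmle
    have hsumB : ∑ b, ∑ a', p a' b = 1 := by rw [Finset.sum_comm]; exact hp.2
    have hprod : ∑ a, ∑ b, (∑ b', p a b') * (∑ a', p a' b) = 1 := by
      rw [show ∑ a, ∑ b, (∑ b', p a b') * (∑ a', p a' b)
          = ∑ a, (∑ b', p a b') * (∑ b, ∑ a', p a' b) from
        sum_congr rfl fun a _ => by rw [Finset.mul_sum]]
      rw [hsumB]
      simp only [mul_one]
      exact hp.2
    -- each summand of the gap is nonneg
    have habs : ∀ a b, (∑ b', p a b') * (∑ a', p a' b) = 0 → p a b = 0 := by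
      intro a b hz
      by_contra hne
      have h0 : 0 < p a b := (hp.1 a b).lt_of_ne (Ne.symm hne)
      have hpA : 0 < ∑ b', p a b' :=
        lt_of_lt_of_le h0 (Finset.single_le_sum (fun i _ => hp.1 a i) (mem_univ b))
      have hpB : 0 < ∑ a', p a' b :=
        lt_of_lt_of_le h0 (Finset.single_le_sum (fun i _ => hp.1 i b) (mem_univ a))
      exact absurd hz (mul_pos hpA hpB).ne'
    have hgap : ∀ a b, 0 ≤ p a b * Real.log (p a b
        / ((∑ b', p a b') * (∑ a', p a' b)))
        - (p a b - (∑ b', p a b') * (∑ a', p a' b)) := by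
      intro a b
      have := key_ineq (p a b) ((∑ b', p a b') * (∑ a', p a' b)) (hp.1 a b)
        (mul_nonneg (Finset.sum_nonneg fun i _ => hp.1 a i)
          (Finset.sum_nonneg fun i _ => hp.1 i b)) (habs a b)
      linarith
    have hgapsum : ∑ a, ∑ b, (p a b * Real.log (p a b
        / ((∑ b', p a b') * (∑ a', p a' b)))
        - (p a b - (∑ b', p a b') * (∑ a', p a' b))) = 0 := by
      have h2 : ∑ a, ∑ b, (p a b - (∑ b', p a b') * (∑ a', p a' b))
          ≤ ∑ a, ∑ b, p a b * Real.log (p a b / ((∑ b', p a b') * (∑ a', p a' b))) :=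
        Finset.sum_le_sum fun a _ => Finset.sum_le_sum fun b _ => by
          have := hgap a b; linarith
      have h3 : ∑ a, ∑ b, (p a b - (∑ b', p a b') * (∑ a', p a' b)) = 0 := by
        simp only [Finset.sum_sub_distrib]
        rw [hp.2, hprod]; ring
      have hS0 : ∑ a, ∑ b, p a b * Real.log (p a b / ((∑ b', p a b') * (∑ a', p a' b))) = 0 := by
        rw [h3] at h2
        linarith
      simp only [Finset.sum_sub_distrib]
      rw [hS0, hp.2, hprod]
      ring
    intro a b
    have houter := (Finset.sum_eq_zero_iff_of_nonneg (fun a _ =>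
      Finset.sum_nonneg fun b _ => hgap a b)).mp hgapsum a (mem_univ a)
    have hzero := (Finset.sum_eq_zero_iff_of_nonneg (fun b _ => hgap a b)).mp houter b (mem_univ b)
    refine key_eq (p a b) ((∑ b', p a b') * (∑ a', p a' b)) (hp.1 a b)
      (mul_nonneg (Finset.sum_nonneg fun i _ => hp.1 a i)
        (Finset.sum_nonneg fun i _ => hp.1 i b)) (habs a b) ?_
    linarith
  · intro h
    refine ⟨zero_le_one, zero_le_one, ?_⟩
    intro γ _ q hq0 hqm
    simp only [one_mul]
    classical
    -- marginals
    have hAmarg : ∀ a, (∑ u, ∑ b, q u a b) = ∑ b', p a b' := by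
      intro a; rw [Finset.sum_comm]
      exact sum_congr rfl fun b _ => hqm a b
    have hBmarg : ∀ b, (∑ u, ∑ a, q u a b) = ∑ a', p a' b := by
      intro b; rw [Finset.sum_comm]
      exact sum_congr rfl fun a _ => hqm a b
    have hQB : ∀ u, (∑ b, ∑ a, q u a b) = ∑ a, ∑ b, q u a b := fun u => Finset.sum_comm
    -- the three mutual informations as triple sums
    have hMA : mutInfo (fun u a => ∑ b, q u a b)
        = ∑ u, ∑ a, ∑ b, q u a b * (Real.log (∑ b', q u a b')
            - Real.log (∑ a', ∑ b', q u a' b') - Real.log (∑ b', p a b')) := by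
      rw [mutInfo_eq]
      refine sum_congr rfl fun u _ => sum_congr rfl fun a _ => ?_
      rw [hAmarg a, Finset.sum_mul]
    have hMB : mutInfo (fun u b => ∑ a, q u a b)
        = ∑ u, ∑ a, ∑ b, q u a b * (Real.log (∑ a', q u a' b)
            - Real.log (∑ a', ∑ b', q u a' b') - Real.log (∑ a', p a' b)) := by
      rw [mutInfo_eq]
      rw [show ∑ u, ∑ b, (∑ a, q u a b) * (Real.log (∑ a, q u a b)
          - Real.log (∑ b', ∑ a, q u a b') - Real.log (∑ u', ∑ a, q u' a b))
        = ∑ u, ∑ b, ∑ a, q u a b * (Real.log (∑ a', q u a' b)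
            - Real.log (∑ a', ∑ b', q u a' b') - Real.log (∑ a', p a' b)) from
        sum_congr rfl fun u _ => sum_congr rfl fun b _ => by
          rw [hBmarg b, hQB u, Finset.sum_mul]]
      exact sum_congr rfl fun u _ => Finset.sum_comm
    have hMJ : mutInfo (fun u (x : α × β) => q u x.1 x.2)
        = ∑ u, ∑ a, ∑ b, q u a b * (Real.log (q u a b)
            - Real.log (∑ a', ∑ b', q u a' b') - Real.log (p a b)) := by
      rw [mutInfo_eq]
      refine sum_congr rfl fun u _ => ?_
      rw [Fintype.sum_prod_type]
      refine sum_congr rfl fun a _ => sum_congr rfl fun b _ => ?_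
      rw [show (∑ x' : α × β, q u x'.1 x'.2) = ∑ a', ∑ b', q u a' b' from
        Fintype.sum_prod_type _, hqm a b]
    rw [hMA, hMB, hMJ]
    -- define w
    set w : γ → α → β → ℝ := fun u a b =>
      (∑ b', q u a b') * (∑ a', q u a' b) / (∑ a', ∑ b', q u a' b') with hw
    -- key termwise identity
    have hkey : ∀ u a b,
        q u a b * (Real.log (q u a b) - Real.log (∑ a', ∑ b', q u a' b') - Real.log (p a b))
        - q u a b * (Real.log (∑ b', q u a b') - Real.log (∑ a', ∑ b', q u a' b')
            - Real.log (∑ b', p a b'))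
        - q u a b * (Real.log (∑ a', q u a' b) - Real.log (∑ a', ∑ b', q u a' b')
            - Real.log (∑ a', p a' b))
        = q u a b * Real.log (q u a b / w u a b) := by
      intro u a b
      rcases (hq0 u a b).eq_or_lt with h0 | h0
      · rw [← h0]; ring
      · have hqA : 0 < ∑ b', q u a b' :=
          lt_of_lt_of_le h0 (Finset.single_le_sum (fun i _ => hq0 u a i) (mem_univ b))
        have hqB : 0 < ∑ a', q u a' b :=
          lt_of_lt_of_le h0 (Finset.single_le_sum (fun i _ => hq0 u i b) (mem_univ a))
        have hQ : 0 < ∑ a', ∑ b', q u a' b' :=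
          lt_of_lt_of_le hqA (Finset.single_le_sum
            (fun i _ => Finset.sum_nonneg fun j _ => hq0 u i j) (mem_univ a))
        have hpp : 0 < p a b := by
          rw [← hqm a b]
          exact lt_of_lt_of_le h0 (Finset.single_le_sum (fun i _ => hq0 i a b) (mem_univ u))
        have hpA : 0 < ∑ b', p a b' :=
          lt_of_lt_of_le hpp (Finset.single_le_sum
            (fun i _ => hp.1 a i) (mem_univ b))
        have hpB : 0 < ∑ a', p a' b :=
          lt_of_lt_of_le hpp (Finset.single_le_sum (fun i _ => hp.1 i b) (mem_univ a))
        have hlogp : Real.log (p a b) = Real.log (∑ b', p a b') + Real.log (∑ a', p a' b) := by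
          rw [h a b, Real.log_mul hpA.ne' hpB.ne']
        have hlogw : Real.log (w u a b)
            = Real.log (∑ b', q u a b') + Real.log (∑ a', q u a' b)
              - Real.log (∑ a', ∑ b', q u a' b') := by
          rw [hw]
          rw [Real.log_div (mul_ne_zero hqA.ne' hqB.ne') hQ.ne', Real.log_mul hqA.ne' hqB.ne']
        have hwpos : 0 < w u a b := by
          rw [hw]; exact div_pos (mul_pos hqA hqB) hQ
        rw [Real.log_div h0.ne' hwpos.ne', hlogw, hlogp]
        ring
    -- sums of q and of w
    have hsumq : ∑ u, ∑ a, ∑ b, q u a b = 1 := by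
      rw [Finset.sum_comm]
      rw [show ∑ a, ∑ u, ∑ b, q u a b = ∑ a, ∑ b, p a b from
        sum_congr rfl fun a _ => hAmarg a]
      exact hp.2
    have hsumw : ∑ u, ∑ a, ∑ b, w u a b = 1 := by
      have hQw : ∀ u, ∑ a, ∑ b, w u a b = ∑ a', ∑ b', q u a' b' := by
        intro u
        have h1 : ∀ a, ∑ b, w u a b
            = (∑ b', q u a b') * (∑ a', ∑ b', q u a' b') / (∑ a', ∑ b', q u a' b') := by
          intro a
          rw [hw]
          simp only
          rw [← Finset.sum_div, ← Finset.mul_sum, hQB u]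
        rw [sum_congr rfl fun a _ => h1 a, ← Finset.sum_div, ← Finset.sum_mul]
        rcases eq_or_ne (∑ a', ∑ b', q u a' b') 0 with h0 | h0
        · simp [h0]
        · field_simp
      rw [sum_congr rfl fun u _ => hQw u]
      exact hsumq
    -- put it together
    have hdiff : ∑ u, ∑ a, ∑ b, (q u a b * Real.log (q u a b / w u a b)) ≥
        ∑ u, ∑ a, ∑ b, (q u a b - w u a b) := by
      refine Finset.sum_le_sum fun u _ => Finset.sum_le_sum fun a _ => Finset.sum_le_sum fun b _ => ?_
      refine key_ineq _ _ (hq0 u a b) ?_ ?_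
      · rw [hw]
        exact div_nonneg (mul_nonneg (Finset.sum_nonneg fun i _ => hq0 u a i)
          (Finset.sum_nonneg fun i _ => hq0 u i b))
          (Finset.sum_nonneg fun i _ => Finset.sum_nonneg fun j _ => hq0 u i j)
      · intro hw0
        by_contra hq'
        have h0 : 0 < q u a b := (hq0 u a b).lt_of_ne (Ne.symm hq')
        have hqA : 0 < ∑ b', q u a b' :=
          lt_of_lt_of_le h0 (Finset.single_le_sum (fun i _ => hq0 u a i) (mem_univ b))
        have hqB : 0 < ∑ a', q u a' b :=
          lt_of_lt_of_le h0 (Finset.single_le_sum (fun i _ => hq0 u i b) (mem_univ a))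
        have hQ : 0 < ∑ a', ∑ b', q u a' b' :=
          lt_of_lt_of_le hqA (Finset.single_le_sum
            (fun i _ => Finset.sum_nonneg fun j _ => hq0 u i j) (mem_univ a))
        have : 0 < w u a b := by rw [hw]; exact div_pos (mul_pos hqA hqB) hQ
        rw [hw0] at this; exact lt_irrefl 0 this
    have heq : ∑ u, ∑ a, ∑ b, (q u a b * Real.log (q u a b / w u a b))
        = (∑ u, ∑ a, ∑ b, q u a b * (Real.log (q u a b)
            - Real.log (∑ a', ∑ b', q u a' b') - Real.log (p a b)))
        - (∑ u, ∑ a, ∑ b, q u a b * (Real.log (∑ b', q u a b')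
            - Real.log (∑ a', ∑ b', q u a' b') - Real.log (∑ b', p a b')))
        - (∑ u, ∑ a, ∑ b, q u a b * (Real.log (∑ a', q u a' b)
            - Real.log (∑ a', ∑ b', q u a' b') - Real.log (∑ a', p a' b))) := by
      simp only [← Finset.sum_sub_distrib]
      exact sum_congr rfl fun u _ => sum_congr rfl fun a _ => sum_congr rfl fun b _ =>
        (hkey u a b).symm
    have hzero : ∑ u, ∑ a, ∑ b, (q u a b - w u a b) = 0 := by
      simp only [Finset.sum_sub_distrib]
      rw [hsumq, hsumw]; ring
    linarith [heq ▸ (hzero ▸ hdiff)]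
end

section
/- If f is a real-valued function of A, B, C where B and C are conditionally independent given A (p_{ABC} = p_{AB} · p_{C|A}), then E_{AB}[Var_{C|AB}[f]] ≥ E_A[Var_{C|A}(E_{B|AC}[f])]. -/
open Finset

noncomputable def expec {α : Type*} [Fintype α] (p f : α → ℝ) : ℝ := ∑ a, p a * f a

noncomputable def pVar {α : Type*} [Fintype α] (p f : α → ℝ) : ℝ :=
  expec p (fun a => f a ^ 2) - (expec p f) ^ 2

noncomputable def margA {α β : Type*} [Fintype α] [Fintype β] (p : α → β → ℝ) : α → ℝ :=
  fun a => ∑ b, p a b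

noncomputable def margB {α β : Type*} [Fintype α] [Fintype β] (p : α → β → ℝ) : β → ℝ :=
  fun b => ∑ a, p a b

/-- conditional expectation `E_{B|A=a}[f]` (with the convention `x / 0 = 0`). -/
noncomputable def condExpB {α β : Type*} [Fintype α] [Fintype β] (p f : α → β → ℝ) : α → ℝ :=
  fun a => (∑ b, p a b * f a b) / margA p a

/-- conditional expectation `E_{A|B=b}[f]` (with the convention `x / 0 = 0`). -/
noncomputable def condExpA {α β : Type*} [Fintype α] [Fintype β] (p f : α → β → ℝ) : β → ℝ :=
  fun b => (∑ a, p a b * f a b) / margB p b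

noncomputable def jointVar {α β : Type*} [Fintype α] [Fintype β] (p f : α → β → ℝ) : ℝ :=
  pVar (fun x : α × β => p x.1 x.2) (fun x => f x.1 x.2)

/-- `(l1, l2)` belongs to the maximal correlation ribbon of `p`:
`Var[f] ≥ l1 * Var_A E_{B|A}[f] + l2 * Var_B E_{A|B}[f]` for every `f`. -/
def memMC {α β : Type*} [Fintype α] [Fintype β] (p : α → β → ℝ) (l1 l2 : ℝ) : Prop :=
  0 ≤ l1 ∧ 0 ≤ l2 ∧ ∀ f : α → β → ℝ,
    l1 * pVar (margA p) (condExpB p f) + l2 * pVar (margB p) (condExpA p f) ≤ jointVar p f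

/-- Maximal correlation of the joint distribution `p`: the supremum of `E[f_A g_B]`
over mean-zero, unit-second-moment functions of `A` and of `B` (0 if no such pair exists,
since `Real.sSup ∅ = 0`). -/
noncomputable def maxCorr {α β : Type*} [Fintype α] [Fintype β] (p : α → β → ℝ) : ℝ :=
  sSup {r | ∃ f : α → ℝ, ∃ g : β → ℝ,
    expec (margA p) f = 0 ∧ expec (margB p) g = 0 ∧
    expec (margA p) (fun a => f a ^ 2) = 1 ∧
    expec (margB p) (fun b => g b ^ 2) = 1 ∧
    r = ∑ a, ∑ b, p a b * f a * g b}

section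
variable {A B C : Type*} [Fintype A] [Fintype B] [Fintype C]

noncomputable def pA3 (p : A → B → C → ℝ) (a : A) : ℝ := ∑ b, ∑ c, p a b c
noncomputable def pAB3 (p : A → B → C → ℝ) (a : A) (b : B) : ℝ := ∑ c, p a b c
noncomputable def pAC3 (p : A → B → C → ℝ) (a : A) (c : C) : ℝ := ∑ b, p a b c

/-- conditional variance `Var_{C|A=a,B=b}[f]` (convention `x / 0 = 0`). -/
noncomputable def condVarCgivenAB (p f : A → B → C → ℝ) (a : A) (b : B) : ℝ :=
  (∑ c, p a b c * f a b c ^ 2) / pAB3 p a b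
    - ((∑ c, p a b c * f a b c) / pAB3 p a b) ^ 2

/-- conditional expectation `E_{B|A=a,C=c}[f]` (convention `x / 0 = 0`). -/
noncomputable def condExpBgivenAC (p f : A → B → C → ℝ) (a : A) (c : C) : ℝ :=
  (∑ b, p a b c * f a b c) / pAC3 p a c

/-- conditional variance `Var_{C|A=a}[g]` of a function `g` of `(A,C)`
(convention `x / 0 = 0`). -/
noncomputable def condVarCgivenA (p : A → B → C → ℝ) (g : A → C → ℝ) (a : A) : ℝ :=
  (∑ c, pAC3 p a c * g a c ^ 2) / pA3 p a
    - ((∑ c, pAC3 p a c * g a c) / pA3 p a) ^ 2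

end

/-!
Fix `a` with `p(a) > 0`. Conditional independence gives `p(c | a, b) = p(c | a)` and
`E[f | a, c] = ∑ b, p(b | a) f(a, b, c)`. Hence the left-hand side at `a` is the variance, under
`p(· | a)`, of the `p(· | a)`-mixture of the functions `f(a, b, ·)`, and the right-hand side is
the same mixture of their variances. Variance is convex in the random variable: it is the
expectation of the square of the centred variable, centring is linear, and `t ↦ t²` is convex.
-/

section Variance
variable {α β : Type*} [Fintype α] [Fintype β]

lemma expec_congr {w f g : α → ℝ} (h : ∀ x, w x ≠ 0 → f x = g x) :
    expec w f = expec w g :=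
  sum_congr rfl fun x _ => by by_cases hx : w x = 0 <;> simp [hx, h]

lemma pVar_congr {w f g : α → ℝ} (h : ∀ x, w x ≠ 0 → f x = g x) :
    pVar w f = pVar w g := by
  rw [pVar, pVar, expec_congr h, expec_congr fun x hx => by rw [h x hx]]

lemma pVar_eq_expec_sq_sub_expec {w : α → ℝ} (hw : ∑ x, w x = 1) (f : α → ℝ) :
    pVar w f = expec w (fun x => (f x - expec w f) ^ 2) := by
  have expand : ∀ m, expec w (fun x => (f x - m) ^ 2)
      = expec w (fun x => f x ^ 2) - 2 * m * expec w f + m ^ 2 * ∑ x, w x := fun m => by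
    simp only [expec, mul_sum, ← sum_sub_distrib, ← sum_add_distrib]
    exact sum_congr rfl fun x _ => by ring
  rw [expand, hw, pVar]
  ring

lemma sq_sum_mul_le_sum_mul_sq {ν : β → ℝ} (hν0 : ∀ b, 0 ≤ ν b) (hν1 : ∑ b, ν b = 1)
    (y : β → ℝ) : (∑ b, ν b * y b) ^ 2 ≤ ∑ b, ν b * y b ^ 2 := by
  simpa only [smul_eq_mul] using
    (even_two.convexOn_pow (𝕜 := ℝ)).map_sum_le (fun b _ => hν0 b) hν1
      (fun b _ => Set.mem_univ _)

lemma pVar_sum_mul_le {w : α → ℝ} (hw0 : ∀ x, 0 ≤ w x) (hw1 : ∑ x, w x = 1)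
    {ν : β → ℝ} (hν0 : ∀ b, 0 ≤ ν b) (hν1 : ∑ b, ν b = 1) (X : β → α → ℝ) :
    pVar w (fun x => ∑ b, ν b * X b x) ≤ ∑ b, ν b * pVar w (X b) := by
  have hmean : expec w (fun x => ∑ b, ν b * X b x) = ∑ b, ν b * expec w (X b) := by
    simp only [expec, mul_sum]
    rw [sum_comm]
    exact sum_congr rfl fun b _ => sum_congr rfl fun x _ => by ring
  have hcentred : ∀ x, (∑ b, ν b * X b x) - ∑ b, ν b * expec w (X b)
      = ∑ b, ν b * (X b x - expec w (X b)) := fun x => by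
    simp only [mul_sub, sum_sub_distrib]
  simp only [pVar_eq_expec_sq_sub_expec hw1, hmean, hcentred]
  calc expec w (fun x => (∑ b, ν b * (X b x - expec w (X b))) ^ 2)
      ≤ expec w (fun x => ∑ b, ν b * (X b x - expec w (X b)) ^ 2) :=
        sum_le_sum fun x _ =>
          mul_le_mul_of_nonneg_left (sq_sum_mul_le_sum_mul_sq hν0 hν1 _) (hw0 x)
    _ = ∑ b, ν b * expec w (fun x => (X b x - expec w (X b)) ^ 2) := by
        simp only [expec, mul_sum]
        rw [sum_comm]
        exact sum_congr rfl fun b _ => sum_congr rfl fun x _ => by ring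

end Variance

section ThreeVariables
variable {A B C : Type*} {p : A → B → C → ℝ}

lemma pAB3_nonneg [Fintype C] (hnn : ∀ a b c, 0 ≤ p a b c) (a : A) (b : B) : 0 ≤ pAB3 p a b :=
  sum_nonneg fun c _ => hnn a b c

lemma pAC3_nonneg [Fintype B] (hnn : ∀ a b c, 0 ≤ p a b c) (a : A) (c : C) : 0 ≤ pAC3 p a c :=
  sum_nonneg fun b _ => hnn a b c

lemma condVarCgivenAB_eq_pVar [Fintype C] (f : A → B → C → ℝ) (a : A) (b : B) :
    condVarCgivenAB p f a b = pVar (fun c => p a b c / pAB3 p a b) (f a b) := by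
  simp only [condVarCgivenAB, pVar, expec, sum_div, div_mul_eq_mul_div]

variable [Fintype B] [Fintype C]

noncomputable def pBgivenA (p : A → B → C → ℝ) (a : A) (b : B) : ℝ := pAB3 p a b / pA3 p a

noncomputable def pCgivenA (p : A → B → C → ℝ) (a : A) (c : C) : ℝ := pAC3 p a c / pA3 p a

lemma sum_pAC3 (a : A) : ∑ c, pAC3 p a c = pA3 p a := sum_comm

lemma sum_pBgivenA {a : A} (ha : pA3 p a ≠ 0) : ∑ b, pBgivenA p a b = 1 := by
  simp only [pBgivenA, ← sum_div]
  exact div_self ha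

lemma sum_pCgivenA {a : A} (ha : pA3 p a ≠ 0) : ∑ c, pCgivenA p a c = 1 := by
  simp only [pCgivenA, ← sum_div, sum_pAC3, div_self ha]

lemma pA3_nonneg (hnn : ∀ a b c, 0 ≤ p a b c) (a : A) : 0 ≤ pA3 p a :=
  sum_nonneg fun b _ => pAB3_nonneg hnn a b

lemma pBgivenA_nonneg (hnn : ∀ a b c, 0 ≤ p a b c) (a : A) (b : B) : 0 ≤ pBgivenA p a b :=
  div_nonneg (pAB3_nonneg hnn a b) (pA3_nonneg hnn a)

lemma pCgivenA_nonneg (hnn : ∀ a b c, 0 ≤ p a b c) (a : A) (c : C) : 0 ≤ pCgivenA p a c :=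
  div_nonneg (pAC3_nonneg hnn a c) (pA3_nonneg hnn a)

lemma pAB3_eq_zero_of_pA3_eq_zero (hnn : ∀ a b c, 0 ≤ p a b c) {a : A} (ha : pA3 p a = 0)
    (b : B) : pAB3 p a b = 0 :=
  (sum_eq_zero_iff_of_nonneg fun b _ => pAB3_nonneg hnn a b).mp ha b (mem_univ b)

lemma condVarCgivenA_eq_pVar (g : A → C → ℝ) (a : A) :
    condVarCgivenA p g a = pVar (pCgivenA p a) (g a) := by
  simp only [condVarCgivenA, pVar, expec, pCgivenA, sum_div, div_mul_eq_mul_div]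

lemma div_pAB3_eq_pCgivenA (hci : ∀ a b c, p a b c * pA3 p a = pAB3 p a b * pAC3 p a c)
    {a : A} {b : B} (ha : pA3 p a ≠ 0) (hab : pAB3 p a b ≠ 0) (c : C) :
    p a b c / pAB3 p a b = pCgivenA p a c := by
  rw [pCgivenA, div_eq_div_iff hab ha, hci, mul_comm]

lemma div_pAC3_eq_pBgivenA (hci : ∀ a b c, p a b c * pA3 p a = pAB3 p a b * pAC3 p a c)
    {a : A} {c : C} (ha : pA3 p a ≠ 0) (hac : pAC3 p a c ≠ 0) (b : B) :
    p a b c / pAC3 p a c = pBgivenA p a b := by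
  rw [pBgivenA, div_eq_div_iff hac ha, hci]

lemma condVarCgivenAB_eq_pVar_pCgivenA
    (hci : ∀ a b c, p a b c * pA3 p a = pAB3 p a b * pAC3 p a c) (f : A → B → C → ℝ)
    {a : A} {b : B} (ha : pA3 p a ≠ 0) (hab : pAB3 p a b ≠ 0) :
    condVarCgivenAB p f a b = pVar (pCgivenA p a) (f a b) := by
  rw [condVarCgivenAB_eq_pVar]
  exact congrArg (pVar · _) (funext (div_pAB3_eq_pCgivenA hci ha hab))

lemma condExpBgivenAC_eq_sum_pBgivenA
    (hci : ∀ a b c, p a b c * pA3 p a = pAB3 p a b * pAC3 p a c) (f : A → B → C → ℝ)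
    {a : A} {c : C} (ha : pA3 p a ≠ 0) (hac : pAC3 p a c ≠ 0) :
    condExpBgivenAC p f a c = ∑ b, pBgivenA p a b * f a b c := by
  rw [condExpBgivenAC, sum_div]
  exact sum_congr rfl fun b _ => by
    rw [mul_div_right_comm, div_pAC3_eq_pBgivenA hci ha hac]

lemma pA3_mul_condVarCgivenA_le (hnn : ∀ a b c, 0 ≤ p a b c)
    (hci : ∀ a b c, p a b c * pA3 p a = pAB3 p a b * pAC3 p a c) (f : A → B → C → ℝ)
    (a : A) :
    pA3 p a * condVarCgivenA p (condExpBgivenAC p f) a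
      ≤ ∑ b, pAB3 p a b * condVarCgivenAB p f a b := by
  rcases (pA3_nonneg hnn a).eq_or_lt with ha | ha
  · simp [← ha, pAB3_eq_zero_of_pA3_eq_zero hnn ha.symm]
  have ha : pA3 p a ≠ 0 := ha.ne'
  have hexp : pVar (pCgivenA p a) (condExpBgivenAC p f a)
      = pVar (pCgivenA p a) (fun c => ∑ b, pBgivenA p a b * f a b c) :=
    pVar_congr fun c hc => condExpBgivenAC_eq_sum_pBgivenA hci f ha
      (by intro h; simp [pCgivenA, h] at hc)
  have hvar : ∀ b, pAB3 p a b * condVarCgivenAB p f a b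
      = pAB3 p a b * pVar (pCgivenA p a) (f a b) := fun b => by
    by_cases hab : pAB3 p a b = 0
    · simp [hab]
    · rw [condVarCgivenAB_eq_pVar_pCgivenA hci f ha hab]
  calc pA3 p a * condVarCgivenA p (condExpBgivenAC p f) a
      = pA3 p a * pVar (pCgivenA p a) (fun c => ∑ b, pBgivenA p a b * f a b c) := by
        rw [condVarCgivenA_eq_pVar, hexp]
    _ ≤ pA3 p a * ∑ b, pBgivenA p a b * pVar (pCgivenA p a) (f a b) := by
        refine mul_le_mul_of_nonneg_left ?_ (pA3_nonneg hnn a)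
        exact pVar_sum_mul_le (pCgivenA_nonneg hnn a) (sum_pCgivenA ha)
          (pBgivenA_nonneg hnn a) (sum_pBgivenA ha) _
    _ = ∑ b, pAB3 p a b * condVarCgivenAB p f a b := by
        simp only [hvar, mul_sum, pBgivenA]
        exact sum_congr rfl fun b _ => by field_simp

end ThreeVariables

theorem expec_condVar_ge_general {A B C : Type} [Fintype A] [Fintype B] [Fintype C]
    (p f : A → B → C → ℝ)
    (hnn : ∀ a b c, 0 ≤ p a b c)
    (hci : ∀ a b c, p a b c * pA3 p a = pAB3 p a b * pAC3 p a c) :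
    (∑ a, pA3 p a * condVarCgivenA p (condExpBgivenAC p f) a)
      ≤ ∑ a, ∑ b, pAB3 p a b * condVarCgivenAB p f a b :=
  sum_le_sum fun a _ => pA3_mul_condVarCgivenA_le hnn hci f a

/-- if `B` and `C` are conditionally independent given `A`, then
`E_{AB}[Var_{C|AB}[f]] ≥ E_A[Var_{C|A}(E_{B|AC}[f])]`. -/
theorem expec_condVar_ge {A B C : Type} [Fintype A] [Fintype B] [Fintype C]
    (p f : A → B → C → ℝ)
    (hnn : ∀ a b c, 0 ≤ p a b c)
    (htot : (∑ a, ∑ b, ∑ c, p a b c) = 1)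
    (hci : ∀ a b c, p a b c * pA3 p a = pAB3 p a b * pAC3 p a c) :
    (∑ a, pA3 p a * condVarCgivenA p (condExpBgivenAC p f) a)
      ≤ ∑ a, ∑ b, pAB3 p a b * condVarCgivenAB p f a b :=
  expec_condVar_ge_general p f hnn hci
end

section
/- For any bipartite distribution p_AB with finite alphabets, ρ²(A,B) = inf { (1−λ₁)/λ₂ : (λ₁,λ₂) ∈ 𝔖(A,B), λ₂ ≠ 0 }, where ρ is the maximal correlation and 𝔖 the maximal correlation ribbon. -/
open Finset

section helpers
variable {γ : Type*} [Fintype γ]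

lemma expec_center (w g : γ → ℝ) (h1 : ∑ i, w i = 1) :
    ∑ i, w i * (g i - expec w g) ^ 2 = pVar w g := by
  unfold pVar expec
  set m := ∑ i, w i * g i with hm
  have h : ∀ i ∈ Finset.univ, w i * (g i - m) ^ 2
      = w i * g i ^ 2 - 2 * m * (w i * g i) + m ^ 2 * w i := fun i _ => by ring
  rw [Finset.sum_congr rfl h, Finset.sum_add_distrib, Finset.sum_sub_distrib,
    ← Finset.mul_sum, ← Finset.mul_sum, h1]
  ring

lemma pVar_nonneg (w g : γ → ℝ) (hw : ∀ i, 0 ≤ w i) (h1 : ∑ i, w i = 1) : 0 ≤ pVar w g := by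
  rw [← expec_center w g h1]
  exact Finset.sum_nonneg fun i _ => mul_nonneg (hw i) (sq_nonneg _)

lemma expec_sq_nonneg (w g : γ → ℝ) (hw : ∀ i, 0 ≤ w i) :
    0 ≤ expec w (fun i => g i ^ 2) :=
  Finset.sum_nonneg fun i _ => mul_nonneg (hw i) (sq_nonneg _)

lemma weighted_cs (w f g : γ → ℝ) (hw : ∀ i, 0 ≤ w i) :
    (∑ i, w i * (f i * g i)) ^ 2 ≤ (∑ i, w i * f i ^ 2) * (∑ i, w i * g i ^ 2) := by
  have key := Finset.sum_mul_sq_le_sq_mul_sq Finset.univ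
    (fun i => Real.sqrt (w i) * f i) (fun i => Real.sqrt (w i) * g i)
  have e1 : ∀ i, Real.sqrt (w i) * f i * (Real.sqrt (w i) * g i) = w i * (f i * g i) := by
    intro i; rw [mul_mul_mul_comm, Real.mul_self_sqrt (hw i)]
  have e2 : ∀ i, (Real.sqrt (w i) * f i) ^ 2 = w i * f i ^ 2 := by
    intro i; rw [mul_pow, Real.sq_sqrt (hw i)]
  have e3 : ∀ i, (Real.sqrt (w i) * g i) ^ 2 = w i * g i ^ 2 := by
    intro i; rw [mul_pow, Real.sq_sqrt (hw i)]
  simp_rw [e1, e2, e3] at key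
  exact key

lemma expec_congr_support (w g1 g2 : γ → ℝ) (h : ∀ i, w i ≠ 0 → g1 i = g2 i) :
    expec w g1 = expec w g2 := by
  unfold expec
  refine Finset.sum_congr rfl fun i _ => ?_
  by_cases hi : w i = 0
  · simp [hi]
  · rw [h i hi]

end helpers

section main
variable {α β : Type} [Fintype α] [Fintype β] (p : α → β → ℝ) (hp : IsDist p)

/-- the set defining maxCorr -/
def mcSet (p : α → β → ℝ) : Set ℝ :=
  {r | ∃ f : α → ℝ, ∃ g : β → ℝ,
    expec (margA p) f = 0 ∧ expec (margB p) g = 0 ∧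
    expec (margA p) (fun a => f a ^ 2) = 1 ∧
    expec (margB p) (fun b => g b ^ 2) = 1 ∧
    r = ∑ a, ∑ b, p a b * f a * g b}

lemma maxCorr_eq : maxCorr p = sSup (mcSet p) := rfl

include hp

lemma margA_nonneg : ∀ a, 0 ≤ margA p a :=
  fun a => Finset.sum_nonneg fun b _ => hp.1 a b

lemma margB_nonneg : ∀ b, 0 ≤ margB p b :=
  fun b => Finset.sum_nonneg fun a _ => hp.1 a b

lemma margA_sum : ∑ a, margA p a = 1 := hp.2

lemma margB_sum : ∑ b, margB p b = 1 := by
  rw [show (∑ b, margB p b) = ∑ b, ∑ a, p a b from rfl, Finset.sum_comm]; exact hp.2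

lemma p_zero_of_margA {a : α} (h : margA p a = 0) : ∀ b, p a b = 0 := by
  intro b
  have := (Finset.sum_eq_zero_iff_of_nonneg (fun b _ => hp.1 a b)).mp h
  exact this b (Finset.mem_univ b)

lemma p_zero_of_margB {b : β} (h : margB p b = 0) : ∀ a, p a b = 0 := by
  intro a
  have := (Finset.sum_eq_zero_iff_of_nonneg (fun a _ => hp.1 a b)).mp h
  exact this a (Finset.mem_univ a)

lemma rowsum (f : α → β → ℝ) (a : α) :
    ∑ b, p a b * f a b = margA p a * condExpB p f a := by
  by_cases h : margA p a = 0
  · rw [h, zero_mul]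
    exact Finset.sum_eq_zero fun b _ => by rw [p_zero_of_margA p hp h b, zero_mul]
  · unfold condExpB; field_simp

lemma colsum (f : α → β → ℝ) (b : β) :
    ∑ a, p a b * f a b = margB p b * condExpA p f b := by
  by_cases h : margB p b = 0
  · rw [h, zero_mul]
    exact Finset.sum_eq_zero fun a _ => by rw [p_zero_of_margB p hp h a, zero_mul]
  · unfold condExpA; field_simp

/-- double-sum Cauchy-Schwarz -/
lemma double_cs (F G : α → β → ℝ) :
    (∑ a, ∑ b, p a b * (F a b * G a b)) ^ 2
      ≤ (∑ a, ∑ b, p a b * F a b ^ 2) * (∑ a, ∑ b, p a b * G a b ^ 2) := by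
  have h := weighted_cs (fun x : α × β => p x.1 x.2) (fun x => F x.1 x.2)
    (fun x => G x.1 x.2) (fun x => hp.1 x.1 x.2)
  simpa [Fintype.sum_prod_type] using h

lemma mcSet_le_one : ∀ r ∈ mcSet p, r ≤ 1 := by
  intro r hr
  obtain ⟨f, g, hf0, hg0, hf2, hg2, hr⟩ := hr
  have e : ∀ a b, p a b * f a * g b = p a b * (f a * g b) := fun a b => by ring
  have h := double_cs p hp (fun a _ => f a) (fun _ b => g b)
  have eF : (∑ a, ∑ b, p a b * f a ^ 2) = 1 := by
    rw [← hf2]; unfold expec margA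
    exact Finset.sum_congr rfl fun a _ => by rw [Finset.sum_mul]
  have eG : (∑ a, ∑ b, p a b * g b ^ 2) = 1 := by
    rw [← hg2]; unfold expec margB
    rw [Finset.sum_comm]
    exact Finset.sum_congr rfl fun b _ => by rw [Finset.sum_mul]
  rw [eF, eG] at h
  have : r ^ 2 ≤ 1 := by
    rw [hr]; simp_rw [e]; simpa using h
  nlinarith [this]

lemma mcSet_bddAbove : BddAbove (mcSet p) := ⟨1, fun r hr => mcSet_le_one p hp r hr⟩

lemma maxCorr_nonneg : 0 ≤ maxCorr p := by
  rw [maxCorr_eq]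
  rcases Set.eq_empty_or_nonempty (mcSet p) with h | ⟨r, hr⟩
  · rw [h, Real.sSup_empty]
  · obtain ⟨f, g, hf0, hg0, hf2, hg2, hrv⟩ := hr
    have hneg : -r ∈ mcSet p := by
      refine ⟨f, fun b => -(g b), hf0, ?_, hf2, ?_, ?_⟩
      · unfold expec at hg0 ⊢
        rw [show (∑ b, margB p b * -g b) = -∑ b, margB p b * g b by
          rw [← Finset.sum_neg_distrib]; exact Finset.sum_congr rfl fun b _ => by ring, hg0,
          neg_zero]
      · simpa [neg_sq] using hg2
      · rw [hrv, ← Finset.sum_neg_distrib]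
        refine Finset.sum_congr rfl fun a _ => ?_
        rw [← Finset.sum_neg_distrib]
        exact Finset.sum_congr rfl fun b _ => by ring
    have h1 := le_csSup (mcSet_bddAbove p hp) (⟨f, g, hf0, hg0, hf2, hg2, hrv⟩ : r ∈ mcSet p)
    have h2 := le_csSup (mcSet_bddAbove p hp) hneg
    linarith

lemma maxCorr_le_one : maxCorr p ≤ 1 := by
  rw [maxCorr_eq]
  exact Real.sSup_le (mcSet_le_one p hp) zero_le_one

lemma dsum_usq (u : α → ℝ) :
    (∑ a, ∑ b, p a b * (fun a (_ : β) => u a) a b ^ 2)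
      = expec (margA p) (fun a => u a ^ 2) := by
  unfold expec margA
  exact Finset.sum_congr rfl fun a _ => by rw [Finset.sum_mul]

lemma dsum_vsq (v : β → ℝ) :
    (∑ a, ∑ b, p a b * (fun (_ : α) b => v b) a b ^ 2)
      = expec (margB p) (fun b => v b ^ 2) := by
  unfold expec margB
  rw [Finset.sum_comm]
  exact Finset.sum_congr rfl fun b _ => by rw [Finset.sum_mul]

lemma corr_bound (u : α → ℝ) (v : β → ℝ) (hu : expec (margA p) u = 0)
    (hv : expec (margB p) v = 0) :
    (∑ a, ∑ b, p a b * (u a * v b))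
      ≤ maxCorr p * (Real.sqrt (expec (margA p) (fun a => u a ^ 2)) *
          Real.sqrt (expec (margB p) (fun b => v b ^ 2))) := by
  set Qu := expec (margA p) (fun a => u a ^ 2) with hQu
  set Qv := expec (margB p) (fun b => v b ^ 2) with hQv
  have hQu0 : 0 ≤ Qu := expec_sq_nonneg _ _ (margA_nonneg p hp)
  have hQv0 : 0 ≤ Qv := expec_sq_nonneg _ _ (margB_nonneg p hp)
  have hcs : (∑ a, ∑ b, p a b * (u a * v b)) ^ 2 ≤ Qu * Qv := by
    have h := double_cs p hp (fun a _ => u a) (fun _ b => v b)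
    rwa [dsum_usq p hp, dsum_vsq p hp, ← hQu, ← hQv] at h
  by_cases hz : Qu = 0 ∨ Qv = 0
  · have hzero : (∑ a, ∑ b, p a b * (u a * v b)) = 0 := by
      have : (∑ a, ∑ b, p a b * (u a * v b)) ^ 2 ≤ 0 := by
        rcases hz with h | h
        · rw [h, zero_mul] at hcs; exact hcs
        · rw [h, mul_zero] at hcs; exact hcs
      have := sq_nonneg (∑ a, ∑ b, p a b * (u a * v b))
      nlinarith
    rw [hzero]
    exact mul_nonneg (maxCorr_nonneg p hp)
      (mul_nonneg (Real.sqrt_nonneg _) (Real.sqrt_nonneg _))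
  · push_neg at hz
    have hQup : 0 < Qu := lt_of_le_of_ne hQu0 (Ne.symm hz.1)
    have hQvp : 0 < Qv := lt_of_le_of_ne hQv0 (Ne.symm hz.2)
    set su := Real.sqrt Qu with hsu
    set sv := Real.sqrt Qv with hsv
    have hsup : 0 < su := Real.sqrt_pos.mpr hQup
    have hsvp : 0 < sv := Real.sqrt_pos.mpr hQvp
    have hsu2 : su ^ 2 = Qu := Real.sq_sqrt hQu0
    have hsv2 : sv ^ 2 = Qv := Real.sq_sqrt hQv0
    set r := (∑ a, ∑ b, p a b * (u a * v b)) / (su * sv) with hr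
    have hmem : r ∈ mcSet p := by
      refine ⟨fun a => u a / su, fun b => v b / sv, ?_, ?_, ?_, ?_, ?_⟩
      · unfold expec at hu ⊢
        rw [show (∑ a, margA p a * (u a / su)) = (∑ a, margA p a * u a) / su by
          rw [Finset.sum_div]; exact Finset.sum_congr rfl fun a _ => by ring, hu, zero_div]
      · unfold expec at hv ⊢
        rw [show (∑ b, margB p b * (v b / sv)) = (∑ b, margB p b * v b) / sv by
          rw [Finset.sum_div]; exact Finset.sum_congr rfl fun b _ => by ring, hv, zero_div]
      · unfold expec at hQu ⊢
        rw [show (∑ a, margA p a * (u a / su) ^ 2) = (∑ a, margA p a * u a ^ 2) / su ^ 2 by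
          rw [Finset.sum_div]; exact Finset.sum_congr rfl fun a _ => by ring]
        rw [← hQu, hsu2]  -- hQu : Qu = expec ...
        exact div_self (ne_of_gt hQup)
      · unfold expec at hQv ⊢
        rw [show (∑ b, margB p b * (v b / sv) ^ 2) = (∑ b, margB p b * v b ^ 2) / sv ^ 2 by
          rw [Finset.sum_div]; exact Finset.sum_congr rfl fun b _ => by ring]
        rw [← hQv, hsv2]
        exact div_self (ne_of_gt hQvp)
      · rw [hr, Finset.sum_div]
        refine Finset.sum_congr rfl fun a _ => ?_
        rw [Finset.sum_div]
        refine Finset.sum_congr rfl fun b _ => ?_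
        field_simp
    have hle : r ≤ maxCorr p := le_csSup (mcSet_bddAbove p hp) hmem
    have : r * (su * sv) ≤ maxCorr p * (su * sv) :=
      mul_le_mul_of_nonneg_right hle (le_of_lt (mul_pos hsup hsvp))
    rwa [hr, div_mul_cancel₀] at this
    exact ne_of_gt (mul_pos hsup hsvp)

lemma mem_ribbon (l1 l2 : ℝ) (h10 : 0 ≤ l1) (h11 : l1 ≤ 1) (h20 : 0 ≤ l2) (h21 : l2 ≤ 1)
    (hkey : l1 * l2 * maxCorr p ^ 2 ≤ (1 - l1) * (1 - l2)) : memMC p l1 l2 := by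
  refine ⟨h10, h20, fun f => ?_⟩
  set u := condExpB p f with hu
  set v := condExpA p f with hv
  set m := ∑ a, ∑ b, p a b * f a b with hm
  have hmu : expec (margA p) u = m := by
    unfold expec
    exact Finset.sum_congr rfl fun a _ => (rowsum p hp f a).symm
  have hmv : expec (margB p) v = m := by
    unfold expec
    rw [hm, Finset.sum_comm]
    exact (Finset.sum_congr rfl fun b _ => colsum p hp f b).symm
  set VU := pVar (margA p) u with hVU
  set VV := pVar (margB p) v with hVV
  have hVU0 : 0 ≤ VU := pVar_nonneg _ _ (margA_nonneg p hp) (margA_sum p hp)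
  have hVV0 : 0 ≤ VV := pVar_nonneg _ _ (margB_nonneg p hp) (margB_sum p hp)
  have hTu : ∑ a, margA p a * (u a - m) ^ 2 = VU := by
    rw [hVU, ← expec_center _ _ (margA_sum p hp), hmu]
  have hTv : ∑ b, margB p b * (v b - m) ^ 2 = VV := by
    rw [hVV, ← expec_center _ _ (margB_sum p hp), hmv]
  have hu0 : expec (margA p) (fun a => u a - m) = 0 := by
    unfold expec
    rw [show (∑ a, margA p a * (u a - m)) = (∑ a, margA p a * u a) - m * ∑ a, margA p a by
      rw [Finset.mul_sum, ← Finset.sum_sub_distrib]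
      exact Finset.sum_congr rfl fun a _ => by ring]
    rw [margA_sum p hp]
    have : (∑ a, margA p a * u a) = m := hmu
    rw [this]; ring
  have hv0 : expec (margB p) (fun b => v b - m) = 0 := by
    unfold expec
    rw [show (∑ b, margB p b * (v b - m)) = (∑ b, margB p b * v b) - m * ∑ b, margB p b by
      rw [Finset.mul_sum, ← Finset.sum_sub_distrib]
      exact Finset.sum_congr rfl fun b _ => by ring]
    rw [margB_sum p hp]
    have : (∑ b, margB p b * v b) = m := hmv
    rw [this]; ring
  set C := ∑ a, ∑ b, p a b * ((u a - m) * (v b - m)) with hC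
  set x := Real.sqrt VU with hx
  set y := Real.sqrt VV with hy
  have hx2 : x ^ 2 = VU := Real.sq_sqrt hVU0
  have hy2 : y ^ 2 = VV := Real.sq_sqrt hVV0
  have hx0 : 0 ≤ x := Real.sqrt_nonneg _
  have hy0 : 0 ≤ y := Real.sqrt_nonneg _
  have hCb : C ≤ maxCorr p * (x * y) := by
    have h := corr_bound p hp (fun a => u a - m) (fun b => v b - m) hu0 hv0
    have e1 : expec (margA p) (fun a => (u a - m) ^ 2) = VU := hTu
    have e2 : expec (margB p) (fun b => (v b - m) ^ 2) = VV := hTv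
    rw [e1, e2] at h
    exact h
  -- positivity
  have hpos : (0:ℝ) ≤ ∑ a, ∑ b,
      p a b * ((f a b - m) - l1 * (u a - m) - l2 * (v b - m)) ^ 2 :=
    Finset.sum_nonneg fun a _ => Finset.sum_nonneg fun b _ =>
      mul_nonneg (hp.1 a b) (sq_nonneg _)
  -- the six sums
  have hT1 : ∑ a, ∑ b, p a b * (f a b - m) ^ 2 = jointVar p f := by
    have h1 : (∑ x : α × β, p x.1 x.2) = 1 := by rw [Fintype.sum_prod_type]; exact hp.2
    have h2 := expec_center (fun x : α × β => p x.1 x.2) (fun x => f x.1 x.2) h1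
    have h3 : expec (fun x : α × β => p x.1 x.2) (fun x => f x.1 x.2) = m := by
      unfold expec; rw [Fintype.sum_prod_type]
    rw [h3] at h2
    unfold jointVar
    rw [← h2, Fintype.sum_prod_type]
  have hT2 : ∑ a, ∑ b, p a b * (u a - m) ^ 2 = VU := by
    rw [← hTu]
    refine Finset.sum_congr rfl fun a _ => ?_
    rw [show margA p a = ∑ b, p a b from rfl, Finset.sum_mul]
  have hT3 : ∑ a, ∑ b, p a b * (v b - m) ^ 2 = VV := by
    rw [← hTv, Finset.sum_comm]
    refine Finset.sum_congr rfl fun b _ => ?_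
    rw [show margB p b = ∑ a, p a b from rfl, Finset.sum_mul]
  have hT4 : ∑ a, ∑ b, p a b * ((f a b - m) * (u a - m)) = VU := by
    rw [← hTu]
    refine Finset.sum_congr rfl fun a _ => ?_
    have e : ∀ b ∈ Finset.univ, p a b * ((f a b - m) * (u a - m))
        = (u a - m) * (p a b * f a b) - ((u a - m) * m) * p a b := fun b _ => by ring
    rw [Finset.sum_congr rfl e, Finset.sum_sub_distrib, ← Finset.mul_sum, ← Finset.mul_sum,
      rowsum p hp f a, show (∑ b, p a b) = margA p a from rfl]
    ring
  have hT5 : ∑ a, ∑ b, p a b * ((f a b - m) * (v b - m)) = VV := by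
    rw [← hTv, Finset.sum_comm]
    refine Finset.sum_congr rfl fun b _ => ?_
    have e : ∀ a ∈ Finset.univ, p a b * ((f a b - m) * (v b - m))
        = (v b - m) * (p a b * f a b) - ((v b - m) * m) * p a b := fun a _ => by ring
    rw [Finset.sum_congr rfl e, Finset.sum_sub_distrib, ← Finset.mul_sum, ← Finset.mul_sum,
      colsum p hp f b, show (∑ a, p a b) = margB p b from rfl]
    ring
  -- expansion
  have hpt : ∀ a b, p a b * ((f a b - m) - l1 * (u a - m) - l2 * (v b - m)) ^ 2
      = p a b * (f a b - m) ^ 2 + l1 ^ 2 * (p a b * (u a - m) ^ 2)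
        + l2 ^ 2 * (p a b * (v b - m) ^ 2)
        - 2 * l1 * (p a b * ((f a b - m) * (u a - m)))
        - 2 * l2 * (p a b * ((f a b - m) * (v b - m)))
        + 2 * l1 * l2 * (p a b * ((u a - m) * (v b - m))) := fun a b => by ring
  have hexp : jointVar p f + l1 ^ 2 * VU + l2 ^ 2 * VV - 2 * l1 * VU - 2 * l2 * VV
      + 2 * l1 * l2 * C
      = ∑ a, ∑ b, p a b * ((f a b - m) - l1 * (u a - m) - l2 * (v b - m)) ^ 2 := by
    simp only [hpt, Finset.sum_add_distrib, Finset.sum_sub_distrib, ← Finset.mul_sum]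
    rw [hT1, hT2, hT3, hT4, hT5, ← hC]
  rw [← hexp] at hpos
  set J := jointVar p f with hJ
  clear_value u v m VU VV x y C J
  -- AM-GM step
  have hρ0 : 0 ≤ maxCorr p := maxCorr_nonneg p hp
  obtain ⟨ρ, hρdef⟩ : ∃ r : ℝ, r = maxCorr p := ⟨_, rfl⟩
  rw [← hρdef] at hρ0 hCb hkey
  set sA := Real.sqrt (l1 * (1 - l1)) with hsA
  set sB := Real.sqrt (l2 * (1 - l2)) with hsB
  have hsA0 : 0 ≤ sA := Real.sqrt_nonneg _
  have hsB0 : 0 ≤ sB := Real.sqrt_nonneg _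
  have hsA2 : sA ^ 2 = l1 * (1 - l1) := Real.sq_sqrt (mul_nonneg h10 (by linarith))
  have hsB2 : sB ^ 2 = l2 * (1 - l2) := Real.sq_sqrt (mul_nonneg h20 (by linarith))
  clear_value sA sB
  have hsq : (l1 * l2 * ρ) ^ 2 ≤ (l1 * (1 - l1)) * (l2 * (1 - l2)) := by
    have h := mul_le_mul_of_nonneg_left hkey (mul_nonneg h10 h20)
    nlinarith only [h]
  have hab : l1 * l2 * ρ ≤ sA * sB := by
    have h1 : Real.sqrt ((l1 * l2 * ρ) ^ 2)
        ≤ Real.sqrt ((l1 * (1 - l1)) * (l2 * (1 - l2))) := Real.sqrt_le_sqrt hsq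
    rwa [Real.sqrt_sq (by positivity), Real.sqrt_mul (mul_nonneg h10 (by linarith)),
      ← hsA, ← hsB] at h1
  have s1 : 2 * l1 * l2 * C ≤ 2 * l1 * l2 * (ρ * (x * y)) :=
    mul_le_mul_of_nonneg_left hCb (by positivity)
  have s2 : 2 * l1 * l2 * (ρ * (x * y)) ≤ 2 * (sA * sB) * (x * y) := by
    have h := mul_le_mul_of_nonneg_right hab (mul_nonneg hx0 hy0)
    calc 2 * l1 * l2 * (ρ * (x * y)) = 2 * (l1 * l2 * ρ * (x * y)) := by ring
      _ ≤ 2 * (sA * sB * (x * y)) := by linarith only [h]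
      _ = 2 * (sA * sB) * (x * y) := by ring
  have s3 : 2 * (sA * sB) * (x * y) ≤ (sA * x) ^ 2 + (sB * y) ^ 2 := by
    calc 2 * (sA * sB) * (x * y) = 2 * (sA * x) * (sB * y) := by ring
      _ ≤ (sA * x) ^ 2 + (sB * y) ^ 2 := two_mul_le_add_sq _ _
  have s4 : (sA * x) ^ 2 + (sB * y) ^ 2 = l1 * (1 - l1) * VU + l2 * (1 - l2) * VV := by
    rw [mul_pow, mul_pow, hsA2, hsB2, hx2, hy2]
  have bracket : 2 * l1 * l2 * C ≤ l1 * (1 - l1) * VU + l2 * (1 - l2) * VV := by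
    linarith only [s1, s2, s3, s4]
  linarith only [hpos, bracket]

lemma condExpB_funA (f : α → ℝ) {a : α} (h : margA p a ≠ 0) :
    condExpB p (fun a _ => f a) a = f a := by
  unfold condExpB
  rw [show (∑ b, p a b * f a) = margA p a * f a by
    rw [show margA p a = ∑ b, p a b from rfl, Finset.sum_mul]]
  exact mul_div_cancel_left₀ _ h

omit hp in
lemma expec_sq_congr (w g1 g2 : α → ℝ) (h : ∀ a, w a ≠ 0 → g1 a = g2 a) :
    pVar w g1 = pVar w g2 := by
  unfold pVar
  rw [expec_congr_support w g1 g2 h,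
    expec_congr_support w (fun a => g1 a ^ 2) (fun a => g2 a ^ 2)
      (fun a ha => by simp only [h a ha])]

lemma pVar_condExpB_funA (f : α → ℝ) :
    pVar (margA p) (condExpB p (fun a _ => f a)) = pVar (margA p) f :=
  expec_sq_congr _ _ _ (fun a ha => condExpB_funA p hp f ha)

lemma jointVar_funA (f : α → ℝ) :
    jointVar p (fun a _ => f a) = pVar (margA p) f := by
  unfold jointVar pVar expec margA
  rw [Fintype.sum_prod_type, Fintype.sum_prod_type]
  have e1 : (∑ a, ∑ b, p a b * f a ^ 2) = ∑ a, (∑ b, p a b) * f a ^ 2 :=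
    Finset.sum_congr rfl fun a _ => by rw [Finset.sum_mul]
  have e2 : (∑ a, ∑ b, p a b * f a) = ∑ a, (∑ b, p a b) * f a :=
    Finset.sum_congr rfl fun a _ => by rw [Finset.sum_mul]
  rw [e1, e2]

/-- core computation for the lower bound -/
lemma ratio_core (l1 l2 : ℝ) (hmc : memMC p l1 l2) (r : ℝ) (hr : r ∈ mcSet p) :
    r ^ 2 * l2 ≤ 1 - l1 := by
  obtain ⟨f, g, hf0, hg0, hf2, hg2, hrv⟩ := hr
  have key := hmc.2.2 (fun a _ => f a)
  rw [pVar_condExpB_funA p hp, jointVar_funA p hp] at key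
  have hpAf : pVar (margA p) f = 1 := by
    unfold pVar; rw [hf2, hf0]; norm_num
  rw [hpAf] at key
  set v := condExpA p (fun a _ => f a) with hv
  have hcol : ∀ b, ∑ a, p a b * f a = margB p b * v b := fun b => by
    simpa using colsum p hp (fun a _ => f a) b
  have hv0 : expec (margB p) v = 0 := by
    unfold expec
    calc ∑ b, margB p b * v b = ∑ b, ∑ a, p a b * f a :=
          Finset.sum_congr rfl fun b _ => (hcol b).symm
      _ = ∑ a, ∑ b, p a b * f a := Finset.sum_comm
      _ = ∑ a, margA p a * f a := Finset.sum_congr rfl fun a _ => by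
          rw [show margA p a = ∑ b, p a b from rfl, Finset.sum_mul]
      _ = 0 := hf0
  have hrq : r = expec (margB p) (fun b => v b * g b) := by
    rw [hrv]
    unfold expec
    calc ∑ a, ∑ b, p a b * f a * g b = ∑ b, ∑ a, p a b * f a * g b := Finset.sum_comm
      _ = ∑ b, (∑ a, p a b * f a) * g b :=
          Finset.sum_congr rfl fun b _ => by rw [Finset.sum_mul]
      _ = ∑ b, margB p b * (v b * g b) :=
          Finset.sum_congr rfl fun b _ => by rw [hcol b]; ring
  have hcs := weighted_cs (margB p) v g (margB_nonneg p hp)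
  have hg2' : (∑ b, margB p b * g b ^ 2) = 1 := hg2
  rw [hg2', mul_one] at hcs
  have hr2 : r ^ 2 ≤ ∑ b, margB p b * v b ^ 2 := by
    rw [hrq]; exact hcs
  have hpv : pVar (margB p) v = ∑ b, margB p b * v b ^ 2 := by
    unfold pVar
    rw [hv0]
    norm_num
    rfl
  have h2 : l2 * r ^ 2 ≤ l2 * pVar (margB p) v := by
    rw [hpv]
    exact mul_le_mul_of_nonneg_left hr2 hmc.2.1
  linarith only [key, h2]

omit hp in
/-- if no standardized function of A exists, all variances vanish -/
lemma allVarZero {γ : Type} [Fintype γ] (w : γ → ℝ) (hw : ∀ a, 0 ≤ w a) (h1 : ∑ a, w a = 1)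
    (hA : ¬∃ f : γ → ℝ, expec w f = 0 ∧ expec w (fun a => f a ^ 2) = 1) :
    ∀ g : γ → ℝ, pVar w g = 0 := by
  intro g
  by_contra hne
  have hpos : 0 < pVar w g := lt_of_le_of_ne (pVar_nonneg w g hw h1) (Ne.symm hne)
  set c := Real.sqrt (pVar w g) with hc
  have hc2 : c ^ 2 = pVar w g := Real.sq_sqrt (le_of_lt hpos)
  have hcpos : 0 < c := Real.sqrt_pos.mpr hpos
  set m := expec w g with hm
  refine hA ⟨fun a => (g a - m) / c, ?_, ?_⟩
  · unfold expec
    rw [Finset.sum_congr rfl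
      (fun a _ => show w a * ((g a - m) / c) = (w a * g a - m * w a) / c by ring),
      ← Finset.sum_div, Finset.sum_sub_distrib, ← Finset.mul_sum, h1]
    have : (∑ a, w a * g a) = m := rfl
    rw [this]; simp
  · unfold expec
    rw [Finset.sum_congr rfl
      (fun a _ => show w a * ((g a - m) / c) ^ 2 = w a * (g a - m) ^ 2 / c ^ 2 by ring),
      ← Finset.sum_div]
    rw [show (∑ a, w a * (g a - m) ^ 2) = pVar w g from expec_center w g h1, hc2]
    exact div_self (ne_of_gt hpos)

lemma l1_le_one (l1 l2 : ℝ) (hmc : memMC p l1 l2)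
    (hA : ∃ f : α → ℝ, expec (margA p) f = 0 ∧ expec (margA p) (fun a => f a ^ 2) = 1) :
    l1 ≤ 1 := by
  obtain ⟨f, hf0, hf2⟩ := hA
  have key := hmc.2.2 (fun a _ => f a)
  rw [pVar_condExpB_funA p hp, jointVar_funA p hp] at key
  have hpAf : pVar (margA p) f = 1 := by
    unfold pVar; rw [hf2, hf0]; norm_num
  rw [hpAf] at key
  have h2 : 0 ≤ l2 * pVar (margB p) (condExpA p fun a _ => f a) :=
    mul_nonneg hmc.2.1 (pVar_nonneg _ _ (margB_nonneg p hp) (margB_sum p hp))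
  linarith only [key, h2]

end main

/-- `ρ²(A,B) = inf {(1-λ₁)/λ₂ : (λ₁,λ₂) ∈ 𝔖(A,B), λ₂ ≠ 0}`. -/
theorem maxCorr_sq_eq_inf_ribbon {α β : Type} [Fintype α] [Fintype β]
    (p : α → β → ℝ) (hp : IsDist p) :
    maxCorr p ^ 2
      = sInf {r | ∃ l1 l2 : ℝ, memMC p l1 l2 ∧ l2 ≠ 0 ∧ r = (1 - l1) / l2} := by
  set T := {r | ∃ l1 l2 : ℝ, memMC p l1 l2 ∧ l2 ≠ 0 ∧ r = (1 - l1) / l2} with hT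
  have hmemT : ∀ (x l1 l2 : ℝ), memMC p l1 l2 → l2 ≠ 0 → x = (1 - l1)/l2 → x ∈ T :=
    fun x l1 l2 h h2 h3 => ⟨l1, l2, h, h2, h3⟩
  by_cases hA : ∃ f : α → ℝ, expec (margA p) f = 0 ∧ expec (margA p) (fun a => f a ^ 2) = 1
  · by_cases hB : ∃ g : β → ℝ, expec (margB p) g = 0 ∧ expec (margB p) (fun b => g b ^ 2) = 1
    · -- main case
      obtain ⟨f0, hf00, hf02⟩ := hA
      obtain ⟨g0, hg00, hg02⟩ := hB
      have hne : (∑ a, ∑ b, p a b * f0 a * g0 b) ∈ mcSet p :=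
        ⟨f0, g0, hf00, hg00, hf02, hg02, rfl⟩
      have hρ0 : 0 ≤ maxCorr p := maxCorr_nonneg p hp
      have hρ1 : maxCorr p ≤ 1 := maxCorr_le_one p hp
      have hlb : ∀ x ∈ T, maxCorr p ^ 2 ≤ x := by
        rintro x ⟨l1, l2, hmc, hl2, rfl⟩
        have hl2p : 0 < l2 := lt_of_le_of_ne hmc.2.1 (Ne.symm hl2)
        have hx0 : 0 ≤ (1 - l1) / l2 := by
          have h := ratio_core p hp l1 l2 hmc _ hne
          have h0 : 0 ≤ 1 - l1 :=
            le_trans (mul_nonneg (sq_nonneg _) hl2p.le) h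
          exact div_nonneg h0 hl2p.le
        have hub : ∀ r ∈ mcSet p, r ≤ Real.sqrt ((1 - l1) / l2) := by
          intro r hr
          have h1 : r ^ 2 ≤ (1 - l1) / l2 :=
            (le_div_iff₀ hl2p).mpr (ratio_core p hp l1 l2 hmc r hr)
          calc r ≤ |r| := le_abs_self r
            _ = Real.sqrt (r ^ 2) := (Real.sqrt_sq_eq_abs r).symm
            _ ≤ _ := Real.sqrt_le_sqrt h1
        have hρx : maxCorr p ≤ Real.sqrt ((1 - l1) / l2) := by
          rw [maxCorr_eq]
          exact Real.sSup_le hub (Real.sqrt_nonneg _)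
        calc maxCorr p ^ 2 ≤ Real.sqrt ((1 - l1) / l2) ^ 2 := pow_le_pow_left₀ hρ0 hρx 2
          _ = (1 - l1) / l2 := Real.sq_sqrt hx0
      have hTne : T.Nonempty :=
        ⟨1, hmemT 1 0 1
          (mem_ribbon p hp 0 1 le_rfl zero_le_one zero_le_one le_rfl (by norm_num))
          one_ne_zero (by norm_num)⟩
      have hub2 : ∀ ε : ℝ, 0 < ε → sInf T ≤ maxCorr p ^ 2 + ε := by
        intro ε hε
        set t := min (1/2 : ℝ) (ε/2) with ht
        have ht0 : 0 < t := lt_min (by norm_num) (by linarith)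
        have ht1 : t ≤ 1/2 := min_le_left _ _
        have htε : t ≤ ε/2 := min_le_right _ _
        set D := 1 - t + t * maxCorr p ^ 2 with hD
        have htρ : 0 ≤ t * maxCorr p ^ 2 := mul_nonneg ht0.le (sq_nonneg _)
        have hDt : 1 - t ≤ D := by rw [hD]; linarith only [htρ]
        have hDpos : 0 < D := by linarith
        set l1 := (1 - t) / D with hl1
        have h10 : 0 ≤ l1 := div_nonneg (by linarith) hDpos.le
        have h11 : l1 ≤ 1 := (div_le_one hDpos).mpr hDt
        have h1l1 : 1 - l1 = t * maxCorr p ^ 2 / D := by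
          rw [hl1, eq_div_iff (ne_of_gt hDpos), sub_mul, one_mul,
            div_mul_cancel₀ _ (ne_of_gt hDpos), hD]
          ring
        have hkey : l1 * t * maxCorr p ^ 2 ≤ (1 - l1) * (1 - t) := by
          rw [h1l1, hl1]
          apply le_of_eq
          ring
        have hmem := mem_ribbon p hp l1 t h10 h11 ht0.le (by linarith) hkey
        have hxmem : (1 - l1) / t ∈ T := hmemT _ l1 t hmem (ne_of_gt ht0) rfl
        have hxval : (1 - l1) / t = maxCorr p ^ 2 / D := by
          rw [h1l1, mul_div_assoc, mul_div_cancel_left₀ _ (ne_of_gt ht0)]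
        have hle : maxCorr p ^ 2 / D ≤ maxCorr p ^ 2 + ε := by
          rw [div_le_iff₀ hDpos, hD]
          have hq1 : maxCorr p ^ 2 ≤ 1 := by nlinarith only [hρ0, hρ1]
          have hg : maxCorr p ^ 2 * (1 - maxCorr p ^ 2) ≤ 1 := by
            nlinarith only [sq_nonneg (maxCorr p ^ 2 - 1/2)]
          have k1 : t * (maxCorr p ^ 2 * (1 - maxCorr p ^ 2)) ≤ t * 1 :=
            mul_le_mul_of_nonneg_left hg ht0.le
          have k2 : ε * (1/2) ≤ ε * (1 - t) :=
            mul_le_mul_of_nonneg_left (by linarith : (1:ℝ)/2 ≤ 1 - t) hε.le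
          have k3 : 0 ≤ ε * t * maxCorr p ^ 2 := by positivity
          have e : (maxCorr p ^ 2 + ε) * (1 - t + t * maxCorr p ^ 2) - maxCorr p ^ 2
              = ε * (1 - t) + ε * t * maxCorr p ^ 2
                - t * (maxCorr p ^ 2 * (1 - maxCorr p ^ 2)) := by ring
          linarith only [k1, k2, k3, htε, e]
        calc sInf T ≤ (1 - l1) / t := csInf_le ⟨maxCorr p ^ 2, hlb⟩ hxmem
          _ = maxCorr p ^ 2 / D := hxval
          _ ≤ maxCorr p ^ 2 + ε := hle
      exact le_antisymm (le_csInf hTne hlb) (le_of_forall_pos_le_add hub2)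
    · -- no standardized g exists
      have hempty : mcSet p = ∅ := by
        ext r
        simp only [Set.mem_empty_iff_false, iff_false]
        rintro ⟨f, g, hf0, hg0, hf2, hg2, _⟩
        exact hB ⟨g, hg0, hg2⟩
      have hmc0 : maxCorr p = 0 := by rw [maxCorr_eq, hempty, Real.sSup_empty]
      have hvzB := allVarZero (margB p) (margB_nonneg p hp) (margB_sum p hp) hB
      have h0mem : (0:ℝ) ∈ T := by
        refine hmemT 0 1 1 ⟨zero_le_one, zero_le_one, fun f => ?_⟩ one_ne_zero (by norm_num)
        have h10 := (mem_ribbon p hp 1 0 zero_le_one le_rfl le_rfl zero_le_one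
          (by norm_num)).2.2 f
        rw [hvzB (condExpA p f)]
        rw [hvzB (condExpA p f)] at h10
        linarith only [h10]
      have hlb : ∀ x ∈ T, (0:ℝ) ≤ x := by
        rintro x ⟨l1, l2, hmc, hl2, rfl⟩
        have hl2p : 0 < l2 := lt_of_le_of_ne hmc.2.1 (Ne.symm hl2)
        exact div_nonneg (by linarith [l1_le_one p hp l1 l2 hmc hA]) hl2p.le
      rw [hmc0]
      norm_num
      exact (le_antisymm (csInf_le ⟨0, hlb⟩ h0mem) (le_csInf ⟨0, h0mem⟩ hlb)).symm
  · -- no standardized f exists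
    have hempty : mcSet p = ∅ := by
      ext r
      simp only [Set.mem_empty_iff_false, iff_false]
      rintro ⟨f, g, hf0, hg0, hf2, hg2, _⟩
      exact hA ⟨f, hf0, hf2⟩
    have hmc0 : maxCorr p = 0 := by rw [maxCorr_eq, hempty, Real.sSup_empty]
    have hvzA := allVarZero (margA p) (margA_nonneg p hp) (margA_sum p hp) hA
    have hmem : ∀ l1 : ℝ, 0 ≤ l1 → memMC p l1 1 := by
      intro l1 hl1
      refine ⟨hl1, zero_le_one, fun f => ?_⟩
      have h01 := (mem_ribbon p hp 0 1 le_rfl zero_le_one zero_le_one le_rfl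
        (by norm_num)).2.2 f
      rw [hvzA (condExpB p f)]
      rw [hvzA (condExpB p f)] at h01
      linarith only [h01]
    have hnb : ¬BddBelow T := by
      rintro ⟨c, hc⟩
      have h1 : (1 - max 0 (2 - c)) / 1 ∈ T :=
        hmemT _ (max 0 (2 - c)) 1 (hmem _ (le_max_left _ _)) one_ne_zero rfl
      have h2 := hc h1
      have h3 : 2 - c ≤ max 0 (2 - c) := le_max_right _ _
      rw [div_one] at h2
      linarith
    rw [hmc0, Real.sInf_of_not_bddBelow hnb]
    norm_num
end

section
/- Let q(xy)·p(ab|xy) be a joint distribution where p is a no-signaling box, i.e., p(a|xy) depends only on x and p(b|xy) depends only on y. Then the maximal correlation of the pair ((A,X),(B,Y)) satisfies ρ(AX, BY) ≤ max{ ρ(X,Y), max_{x,y} ρ(A,B | X=x, Y=y) }. -/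
open Finset

section Aux
variable {α β : Type*} [Fintype α] [Fintype β]

lemma expec_nonneg' (p f : α → ℝ) (hp : ∀ a, 0 ≤ p a) (hf : ∀ a, 0 ≤ f a) :
    0 ≤ expec p f :=
  Finset.sum_nonneg fun a _ => mul_nonneg (hp a) (hf a)

lemma pVar_eq (p f : α → ℝ) (hsum : ∑ a, p a = 1) :
    pVar p f = expec p (fun a => (f a - expec p f) ^ 2) := by
  unfold pVar expec
  have : ∑ a, p a * (f a - ∑ a', p a' * f a') ^ 2
      = ∑ a, (p a * f a ^ 2 - 2 * (∑ a', p a' * f a') * (p a * f a)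
          + (∑ a', p a' * f a') ^ 2 * p a) := by
    exact Finset.sum_congr rfl fun a _ => by ring
  rw [this, Finset.sum_add_distrib, Finset.sum_sub_distrib, ← Finset.mul_sum, ← Finset.mul_sum,
    hsum]
  ring

lemma pVar_nonneg_s15 (p f : α → ℝ) (hp : ∀ a, 0 ≤ p a) (hsum : ∑ a, p a = 1) :
    0 ≤ pVar p f := by
  rw [pVar_eq p f hsum]
  exact expec_nonneg' _ _ hp fun a => sq_nonneg _

/-- Cauchy–Schwarz on double sums. -/
lemma cs_double (p : α → β → ℝ) (hp0 : ∀ a b, 0 ≤ p a b) (u : α → ℝ) (v : β → ℝ) :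
    (∑ a, ∑ b, p a b * u a * v b) ^ 2 ≤
      expec (margA p) (fun a => u a ^ 2) * expec (margB p) (fun b => v b ^ 2) := by
  have h1 : ∑ a, ∑ b, p a b * u a * v b
      = ∑ x : α × β, (Real.sqrt (p x.1 x.2) * u x.1) * (Real.sqrt (p x.1 x.2) * v x.2) := by
    rw [Fintype.sum_prod_type]
    refine Finset.sum_congr rfl fun a _ => Finset.sum_congr rfl fun b _ => ?_
    dsimp only
    linear_combination (-(u a * v b)) * Real.mul_self_sqrt (hp0 a b)
  have h2 : ∑ x : α × β, (Real.sqrt (p x.1 x.2) * u x.1) ^ 2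
      = expec (margA p) (fun a => u a ^ 2) := by
    rw [Fintype.sum_prod_type]
    unfold expec margA
    refine Finset.sum_congr rfl fun a _ => ?_
    rw [Finset.sum_mul]
    refine Finset.sum_congr rfl fun b _ => ?_
    dsimp only
    linear_combination (u a ^ 2) * Real.sq_sqrt (hp0 a b)
  have h3 : ∑ x : α × β, (Real.sqrt (p x.1 x.2) * v x.2) ^ 2
      = expec (margB p) (fun b => v b ^ 2) := by
    rw [Fintype.sum_prod_type_right]
    unfold expec margB
    refine Finset.sum_congr rfl fun b _ => ?_
    rw [Finset.sum_mul]
    refine Finset.sum_congr rfl fun a _ => ?_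
    dsimp only
    linear_combination (v b ^ 2) * Real.sq_sqrt (hp0 a b)
  rw [h1, ← h2, ← h3]
  exact Finset.sum_mul_sq_le_sq_mul_sq _ _ _

lemma mc_upper (p : α → β → ℝ) (hp0 : ∀ a b, 0 ≤ p a b) {r : ℝ}
    (hr : r ∈ {r | ∃ f : α → ℝ, ∃ g : β → ℝ,
      expec (margA p) f = 0 ∧ expec (margB p) g = 0 ∧
      expec (margA p) (fun a => f a ^ 2) = 1 ∧
      expec (margB p) (fun b => g b ^ 2) = 1 ∧
      r = ∑ a, ∑ b, p a b * f a * g b}) : r ≤ 1 := by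
  obtain ⟨f, g, _, _, hf2, hg2, rfl⟩ := hr
  have := cs_double p hp0 f g
  rw [hf2, hg2] at this
  nlinarith [this]

lemma mc_bddAbove (p : α → β → ℝ) (hp0 : ∀ a b, 0 ≤ p a b) :
    BddAbove {r | ∃ f : α → ℝ, ∃ g : β → ℝ,
      expec (margA p) f = 0 ∧ expec (margB p) g = 0 ∧
      expec (margA p) (fun a => f a ^ 2) = 1 ∧
      expec (margB p) (fun b => g b ^ 2) = 1 ∧
      r = ∑ a, ∑ b, p a b * f a * g b} :=
  ⟨1, fun _ hr => mc_upper p hp0 hr⟩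

lemma maxCorr_le_one_s15 (p : α → β → ℝ) (hp0 : ∀ a b, 0 ≤ p a b) : maxCorr p ≤ 1 :=
  Real.sSup_le (fun _ hr => mc_upper p hp0 hr) zero_le_one

lemma maxCorr_nonneg_s15 (p : α → β → ℝ) (hp0 : ∀ a b, 0 ≤ p a b) : 0 ≤ maxCorr p := by
  unfold maxCorr
  set S := {r | ∃ f : α → ℝ, ∃ g : β → ℝ,
      expec (margA p) f = 0 ∧ expec (margB p) g = 0 ∧
      expec (margA p) (fun a => f a ^ 2) = 1 ∧
      expec (margB p) (fun b => g b ^ 2) = 1 ∧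
      r = ∑ a, ∑ b, p a b * f a * g b} with hS
  rcases Set.eq_empty_or_nonempty S with h | ⟨r, hr⟩
  · rw [h, Real.sSup_empty]
  · obtain ⟨f, g, h1, h2, h3, h4, hr5⟩ := hr
    have hneg : -r ∈ S := by
      refine ⟨fun a => -f a, g, ?_, h2, ?_, h4, ?_⟩
      · unfold expec at h1 ⊢; simp only [mul_neg]; rw [Finset.sum_neg_distrib, h1, neg_zero]
      · unfold expec at h3 ⊢; simpa using h3
      · rw [hr5]
        rw [← Finset.sum_neg_distrib]
        refine Finset.sum_congr rfl fun a _ => ?_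
        rw [← Finset.sum_neg_distrib]
        exact Finset.sum_congr rfl fun b _ => by ring
    have b1 := le_csSup (mc_bddAbove p hp0) (by exact ⟨f, g, h1, h2, h3, h4, hr5⟩)
    have b2 := le_csSup (mc_bddAbove p hp0) hneg
    linarith

end Aux

section Core
variable {α β : Type*} [Fintype α] [Fintype β]

lemma expec_div (p f : α → ℝ) (c : ℝ) :
    expec p (fun a => f a / c) = expec p f / c := by
  unfold expec
  rw [Finset.sum_div]
  exact Finset.sum_congr rfl fun a _ => by ring

lemma expec_sub_const (p f : α → ℝ) (c : ℝ) (h1 : ∑ a, p a = 1) :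
    expec p (fun a => f a - c) = expec p f - c := by
  unfold expec
  have e : ∀ a, p a * (f a - c) = p a * f a - c * p a := fun a => by ring
  simp only [e]
  rw [Finset.sum_sub_distrib, ← Finset.mul_sum, h1, mul_one]

lemma centered_bound (p : α → β → ℝ) (hp0 : ∀ a b, 0 ≤ p a b)
    (u : α → ℝ) (v : β → ℝ)
    (hu : expec (margA p) u = 0) (hv : expec (margB p) v = 0) :
    ∑ a, ∑ b, p a b * u a * v b ≤
      maxCorr p * Real.sqrt (expec (margA p) (fun a => u a ^ 2))
        * Real.sqrt (expec (margB p) (fun b => v b ^ 2)) := by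
  have hsu0 : 0 ≤ expec (margA p) (fun a => u a ^ 2) :=
    expec_nonneg' _ _ (fun a => Finset.sum_nonneg fun b _ => hp0 a b) fun a => sq_nonneg _
  have hsv0 : 0 ≤ expec (margB p) (fun b => v b ^ 2) :=
    expec_nonneg' _ _ (fun b => Finset.sum_nonneg fun a _ => hp0 a b) fun b => sq_nonneg _
  set su := expec (margA p) (fun a => u a ^ 2) with hsu
  set sv := expec (margB p) (fun b => v b ^ 2) with hsv
  have hcs := cs_double p hp0 u v
  rcases eq_or_lt_of_le hsu0 with h0 | hpos
  · have h1 : (∑ a, ∑ b, p a b * u a * v b) ^ 2 ≤ 0 := by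
      rw [← hsu, ← hsv] at hcs
      nlinarith [hcs, hsv0]
    have h2 : Real.sqrt su = 0 := by rw [← h0]; exact Real.sqrt_zero
    rw [h2]
    nlinarith [h1, sq_nonneg (∑ a, ∑ b, p a b * u a * v b)]
  rcases eq_or_lt_of_le hsv0 with h0 | hposv
  · have h1 : (∑ a, ∑ b, p a b * u a * v b) ^ 2 ≤ 0 := by
      rw [← hsu, ← hsv] at hcs
      nlinarith [hcs, hsu0]
    have h2 : Real.sqrt sv = 0 := by rw [← h0]; exact Real.sqrt_zero
    rw [h2]
    nlinarith [h1, sq_nonneg (∑ a, ∑ b, p a b * u a * v b)]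
  · set cu := Real.sqrt su with hcud
    set cv := Real.sqrt sv with hcvd
    have hcu : 0 < cu := Real.sqrt_pos.2 hpos
    have hcv : 0 < cv := Real.sqrt_pos.2 hposv
    have hcu2 : cu ^ 2 = su := Real.sq_sqrt hsu0
    have hcv2 : cv ^ 2 = sv := Real.sq_sqrt hsv0
    have hmem : (∑ a, ∑ b, p a b * u a * v b) / (cu * cv) ≤ maxCorr p := by
      refine le_csSup (mc_bddAbove p hp0) ⟨fun a => u a / cu, fun b => v b / cv, ?_, ?_, ?_, ?_, ?_⟩
      · rw [expec_div, hu, zero_div]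
      · rw [expec_div, hv, zero_div]
      · have e : (fun a => (u a / cu) ^ 2) = fun a => u a ^ 2 / su := by
          funext a; rw [div_pow, hcu2]
        rw [e, expec_div, ← hsu, div_self hpos.ne']
      · have e : (fun b => (v b / cv) ^ 2) = fun b => v b ^ 2 / sv := by
          funext b; rw [div_pow, hcv2]
        rw [e, expec_div, ← hsv, div_self hposv.ne']
      · rw [Finset.sum_div]
        refine Finset.sum_congr rfl fun a _ => ?_
        rw [Finset.sum_div]
        refine Finset.sum_congr rfl fun b _ => ?_
        field_simp
    rw [div_le_iff₀ (by positivity)] at hmem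
    calc ∑ a, ∑ b, p a b * u a * v b ≤ maxCorr p * (cu * cv) := hmem
      _ = maxCorr p * cu * cv := by ring

lemma double_decomp (p : α → β → ℝ) (hp1 : ∑ a, ∑ b, p a b = 1)
    (u : α → ℝ) (v : β → ℝ) (c d : ℝ)
    (hc : expec (margA p) u = c) (hd : expec (margB p) v = d) :
    ∑ a, ∑ b, p a b * (u a - c) * (v b - d)
      = (∑ a, ∑ b, p a b * u a * v b) - c * d := by
  have e1 : ∀ a b, p a b * (u a - c) * (v b - d)
      = p a b * u a * v b - c * (p a b * v b) - d * (p a b * u a) + c * d * p a b :=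
    fun a b => by ring
  have hA : ∑ a, ∑ b, p a b * u a = c := by
    rw [← hc]; unfold expec margA
    exact Finset.sum_congr rfl fun a _ => (Finset.sum_mul _ _ _).symm
  have hB : ∑ a, ∑ b, p a b * v b = d := by
    rw [← hd]; unfold expec margB
    rw [Finset.sum_comm]
    exact Finset.sum_congr rfl fun b _ => (Finset.sum_mul _ _ _).symm
  simp only [e1, Finset.sum_add_distrib, Finset.sum_sub_distrib, ← Finset.mul_sum]
  rw [hA, hB, hp1]
  ring

lemma condexp_bound (p : α → β → ℝ) (hp0 : ∀ a b, 0 ≤ p a b)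
    (hp1 : ∑ a, ∑ b, p a b = 1) (u : α → ℝ) (v : β → ℝ) :
    ∑ a, ∑ b, p a b * u a * v b ≤
      expec (margA p) u * expec (margB p) v
        + maxCorr p * Real.sqrt (pVar (margA p) u) * Real.sqrt (pVar (margB p) v) := by
  have hmA1 : ∑ a, margA p a = 1 := hp1
  have hmB1 : ∑ b, margB p b = 1 := by
    unfold margB; rw [Finset.sum_comm]; exact hp1
  set mu := expec (margA p) u with hmu
  set mv := expec (margB p) v with hmv
  have hdec := double_decomp p hp1 u v mu mv hmu.symm hmv.symm
  have hcent := centered_bound p hp0 (fun a => u a - mu) (fun b => v b - mv)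
    (by rw [expec_sub_const _ _ _ hmA1, ← hmu, sub_self])
    (by rw [expec_sub_const _ _ _ hmB1, ← hmv, sub_self])
  have hVu : pVar (margA p) u = expec (margA p) (fun a => (u a - mu) ^ 2) := by
    rw [pVar_eq _ _ hmA1]
  have hVv : pVar (margB p) v = expec (margB p) (fun b => (v b - mv) ^ 2) := by
    rw [pVar_eq _ _ hmB1]
  rw [hVu, hVv]
  linarith [hcent, hdec.symm.le, hdec.le]

end Core

section Main

lemma expec_add {α : Type*} [Fintype α] (p f g : α → ℝ) :
    expec p (fun a => f a + g a) = expec p f + expec p g := by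
  unfold expec
  rw [← Finset.sum_add_distrib]
  exact Finset.sum_congr rfl fun a _ => by ring

lemma sum_split {ι : Type*} [Fintype ι] (A B : ι → ℝ) (c : ℝ) :
    ∑ i, (A i + c * B i) = (∑ i, A i) + c * ∑ i, B i := by
  rw [Finset.mul_sum, ← Finset.sum_add_distrib]

lemma sum4 {A X B Y : Type*} [Fintype A] [Fintype X] [Fintype B] [Fintype Y]
    (h : A → X → B → Y → ℝ) :
    (∑ ax : A × X, ∑ bY : B × Y, h ax.1 ax.2 bY.1 bY.2)
      = ∑ x, ∑ y, ∑ a, ∑ b, h a x b y := by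
  rw [Fintype.sum_prod_type, Finset.sum_comm]
  refine Finset.sum_congr rfl fun x _ => ?_
  calc ∑ a, ∑ bY : B × Y, h a x bY.1 bY.2
      = ∑ a, ∑ y, ∑ b, h a x b y :=
        Finset.sum_congr rfl fun a _ => by rw [Fintype.sum_prod_type_right]
    _ = ∑ y, ∑ a, ∑ b, h a x b y := Finset.sum_comm

/-- for a no-signaling box `p(ab|xy)` with inputs distributed as `q(xy)`,
the maximal correlation of the pair `((A,X),(B,Y))` is bounded by the maximum of
`ρ(X,Y)` and the maximal correlation of the box, `max_{x,y} ρ(A,B|X=x,Y=y)`. -/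
theorem maxCorr_wiring_bound {X Y A B : Type}
    [Fintype X] [Fintype Y] [Fintype A] [Fintype B]
    (q : X → Y → ℝ) (hq : IsDist q)
    (p : X → Y → A → B → ℝ)
    (hp : ∀ x y, IsDist (p x y))
    (hnsA : ∀ x y y' a, (∑ b, p x y a b) = ∑ b, p x y' a b)
    (hnsB : ∀ x x' y b, (∑ a, p x y a b) = ∑ a, p x' y a b) :
    maxCorr (fun (ax : A × X) (bY : B × Y) => q ax.2 bY.2 * p ax.2 bY.2 ax.1 bY.1)
      ≤ max (maxCorr q)
          (sSup (Set.range fun xy : X × Y => maxCorr (p xy.1 xy.2))) := by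
  obtain ⟨hq0, hq1⟩ := hq
  have hX : Nonempty X := by
    by_contra h
    rw [not_nonempty_iff] at h
    simp only [Finset.univ_eq_empty, Finset.sum_empty] at hq1
    exact absurd hq1 (by norm_num)
  have hY : Nonempty Y := by
    by_contra h
    rw [not_nonempty_iff] at h
    simp only [Finset.univ_eq_empty, Finset.sum_empty, Finset.sum_const_zero] at hq1
    exact absurd hq1 (by norm_num)
  obtain ⟨x₀⟩ := hX
  obtain ⟨y₀⟩ := hY
  set M2 := sSup (Set.range fun xy : X × Y => maxCorr (p xy.1 xy.2)) with hM2d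
  have hrbdd : BddAbove (Set.range fun xy : X × Y => maxCorr (p xy.1 xy.2)) := by
    refine ⟨1, ?_⟩
    rintro _ ⟨xy, rfl⟩
    exact maxCorr_le_one_s15 _ (hp xy.1 xy.2).1
  have hM2xy : ∀ x y, maxCorr (p x y) ≤ M2 := fun x y => le_csSup hrbdd ⟨(x, y), rfl⟩
  have hM2nn : 0 ≤ M2 :=
    le_trans (maxCorr_nonneg_s15 (p x₀ y₀) (hp x₀ y₀).1) (hM2xy x₀ y₀)
  have hMnn : 0 ≤ max (maxCorr q) M2 := le_trans hM2nn (le_max_right _ _)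
  refine Real.sSup_le ?_ hMnn
  rintro r ⟨f, g, hf0, hg0, hf2, hg2, rfl⟩
  -- marginal distributions of the box, independent of the other input
  have hpA0 : ∀ x a, 0 ≤ margA (p x y₀) a :=
    fun x a => Finset.sum_nonneg fun b _ => (hp x y₀).1 a b
  have hpB0 : ∀ y b, 0 ≤ margB (p x₀ y) b :=
    fun y b => Finset.sum_nonneg fun a _ => (hp x₀ y).1 a b
  have hpAsum : ∀ x, ∑ a, margA (p x y₀) a = 1 := fun x => (hp x y₀).2
  have hpBsum : ∀ y, ∑ b, margB (p x₀ y) b = 1 := by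
    intro y
    unfold margB
    rw [Finset.sum_comm]
    exact (hp x₀ y).2
  have hqA0 : ∀ x, 0 ≤ margA q x := fun x => Finset.sum_nonneg fun y _ => hq0 x y
  have hqB0 : ∀ y, 0 ≤ margB q y := fun y => Finset.sum_nonneg fun x _ => hq0 x y
  -- marginals of the big distribution
  have hmargAP : ∀ φ : A × X → ℝ,
      expec (margA (fun (ax : A × X) (bY : B × Y) =>
          q ax.2 bY.2 * p ax.2 bY.2 ax.1 bY.1)) φ
        = expec (margA q) (fun x => expec (margA (p x y₀)) (fun a => φ (a, x))) := by
    intro φ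
    show (∑ ax : A × X, (∑ bY : B × Y, q ax.2 bY.2 * p ax.2 bY.2 ax.1 bY.1) * φ ax)
        = ∑ x, margA q x * ∑ a, margA (p x y₀) a * φ (a, x)
    rw [Fintype.sum_prod_type, Finset.sum_comm]
    refine Finset.sum_congr rfl fun x _ => ?_
    rw [Finset.mul_sum]
    refine Finset.sum_congr rfl fun a _ => ?_
    have hinner : (∑ bY : B × Y, q x bY.2 * p x bY.2 a bY.1)
        = margA q x * margA (p x y₀) a := by
      rw [Fintype.sum_prod_type_right]
      show (∑ y, ∑ b, q x y * p x y a b) = (∑ y, q x y) * margA (p x y₀) a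
      rw [Finset.sum_mul]
      refine Finset.sum_congr rfl fun y _ => ?_
      rw [← Finset.mul_sum]
      show q x y * ∑ b, p x y a b = q x y * ∑ b, p x y₀ a b
      rw [hnsA x y y₀ a]
    show (∑ bY : B × Y, q x bY.2 * p x bY.2 a bY.1) * φ (a, x)
        = margA q x * (margA (p x y₀) a * φ (a, x))
    rw [hinner]; ring
  have hmargBP : ∀ ψ : B × Y → ℝ,
      expec (margB (fun (ax : A × X) (bY : B × Y) =>
          q ax.2 bY.2 * p ax.2 bY.2 ax.1 bY.1)) ψ
        = expec (margB q) (fun y => expec (margB (p x₀ y)) (fun b => ψ (b, y))) := by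
    intro ψ
    show (∑ bY : B × Y, (∑ ax : A × X, q ax.2 bY.2 * p ax.2 bY.2 ax.1 bY.1) * ψ bY)
        = ∑ y, margB q y * ∑ b, margB (p x₀ y) b * ψ (b, y)
    rw [Fintype.sum_prod_type, Finset.sum_comm]
    refine Finset.sum_congr rfl fun y _ => ?_
    rw [Finset.mul_sum]
    refine Finset.sum_congr rfl fun b _ => ?_
    have hinner : (∑ ax : A × X, q ax.2 y * p ax.2 y ax.1 b)
        = margB q y * margB (p x₀ y) b := by
      rw [Fintype.sum_prod_type_right]
      show (∑ x, ∑ a, q x y * p x y a b) = (∑ x, q x y) * margB (p x₀ y) b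
      rw [Finset.sum_mul]
      refine Finset.sum_congr rfl fun x _ => ?_
      rw [← Finset.mul_sum]
      show q x y * ∑ a, p x y a b = q x y * ∑ a, p x₀ y a b
      rw [hnsB x x₀ y b]
    show (∑ ax : A × X, q ax.2 y * p ax.2 y ax.1 b) * ψ (b, y)
        = margB q y * (margB (p x₀ y) b * ψ (b, y))
    rw [hinner]; ring
  -- conditional means and variances
  set F : X → ℝ := fun x => expec (margA (p x y₀)) (fun a => f (a, x)) with hF
  set G : Y → ℝ := fun y => expec (margB (p x₀ y)) (fun b => g (b, y)) with hG
  set Vf : X → ℝ := fun x => pVar (margA (p x y₀)) (fun a => f (a, x)) with hVf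
  set Vg : Y → ℝ := fun y => pVar (margB (p x₀ y)) (fun b => g (b, y)) with hVg
  have hVfnn : ∀ x, 0 ≤ Vf x :=
    fun x => pVar_nonneg_s15 _ _ (hpA0 x) (hpAsum x)
  have hVgnn : ∀ y, 0 ≤ Vg y :=
    fun y => pVar_nonneg_s15 _ _ (hpB0 y) (hpBsum y)
  have e0A : expec (margA q) F = 0 := (hmargAP f).symm.trans hf0
  have e0B : expec (margB q) G = 0 := (hmargBP g).symm.trans hg0
  have e2A : expec (margA q) (fun x => F x ^ 2 + Vf x) = 1 := by
    have h1 : (fun x => F x ^ 2 + Vf x)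
        = fun x => expec (margA (p x y₀)) (fun a => f (a, x) ^ 2) := by
      funext x
      have h2 : F x = expec (margA (p x y₀)) (fun a => f (a, x)) := congrFun hF x
      have h3 : Vf x = pVar (margA (p x y₀)) (fun a => f (a, x)) := congrFun hVf x
      rw [h2, h3]
      unfold pVar
      ring
    rw [h1]
    exact (hmargAP (fun ax => f ax ^ 2)).symm.trans hf2
  have e2B : expec (margB q) (fun y => G y ^ 2 + Vg y) = 1 := by
    have h1 : (fun y => G y ^ 2 + Vg y)
        = fun y => expec (margB (p x₀ y)) (fun b => g (b, y) ^ 2) := by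
      funext y
      have h2 : G y = expec (margB (p x₀ y)) (fun b => g (b, y)) := congrFun hG y
      have h3 : Vg y = pVar (margB (p x₀ y)) (fun b => g (b, y)) := congrFun hVg y
      rw [h2, h3]
      unfold pVar
      ring
    rw [h1]
    exact (hmargBP (fun bY => g bY ^ 2)).symm.trans hg2
  -- second moments sum to one
  have hacsum : expec (margA q) (fun x => F x ^ 2) + expec (margA q) Vf = 1 := by
    have := expec_add (margA q) (fun x => F x ^ 2) Vf
    rw [← this]
    exact e2A
  have hbdsum : expec (margB q) (fun y => G y ^ 2) + expec (margB q) Vg = 1 := by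
    have := expec_add (margB q) (fun y => G y ^ 2) Vg
    rw [← this]
    exact e2B
  have ha2nn : 0 ≤ expec (margA q) (fun x => F x ^ 2) :=
    expec_nonneg' _ _ hqA0 fun x => sq_nonneg _
  have hb2nn : 0 ≤ expec (margB q) (fun y => G y ^ 2) :=
    expec_nonneg' _ _ hqB0 fun y => sq_nonneg _
  have hc2nn : 0 ≤ expec (margA q) Vf := expec_nonneg' _ _ hqA0 hVfnn
  have hd2nn : 0 ≤ expec (margB q) Vg := expec_nonneg' _ _ hqB0 hVgnn
  -- key pointwise bound
  have key : ∀ x y, (∑ a, ∑ b, p x y a b * f (a, x) * g (b, y))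
      ≤ F x * G y + M2 * (Real.sqrt (Vf x) * Real.sqrt (Vg y)) := by
    intro x y
    have h := condexp_bound (p x y) (hp x y).1 (hp x y).2
      (fun a => f (a, x)) (fun b => g (b, y))
    have hmA : margA (p x y) = margA (p x y₀) := funext fun a => hnsA x y y₀ a
    have hmB : margB (p x y) = margB (p x₀ y) := funext fun b => hnsB x x₀ y b
    rw [hmA, hmB] at h
    have h1 : expec (margA (p x y₀)) (fun a => f (a, x)) = F x := (congrFun hF x).symm
    have h2 : expec (margB (p x₀ y)) (fun b => g (b, y)) = G y := (congrFun hG y).symm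
    have h3 : pVar (margA (p x y₀)) (fun a => f (a, x)) = Vf x := (congrFun hVf x).symm
    have h4 : pVar (margB (p x₀ y)) (fun b => g (b, y)) = Vg y := (congrFun hVg y).symm
    rw [h1, h2, h3, h4] at h
    refine h.trans ?_
    have hprod : 0 ≤ Real.sqrt (Vf x) * Real.sqrt (Vg y) :=
      mul_nonneg (Real.sqrt_nonneg _) (Real.sqrt_nonneg _)
    have hmul : maxCorr (p x y) * Real.sqrt (Vf x) * Real.sqrt (Vg y)
        ≤ M2 * (Real.sqrt (Vf x) * Real.sqrt (Vg y)) := by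
      rw [mul_assoc]
      exact mul_le_mul_of_nonneg_right (hM2xy x y) hprod
    linarith only [hmul]
  -- Cauchy–Schwarz on the variance part
  have hcs2 : (∑ x, ∑ y, q x y * Real.sqrt (Vf x) * Real.sqrt (Vg y)) ^ 2
      ≤ expec (margA q) (fun x => Real.sqrt (Vf x) ^ 2)
        * expec (margB q) (fun y => Real.sqrt (Vg y) ^ 2) :=
    cs_double q hq0 _ _
  have eVf : (fun x => Real.sqrt (Vf x) ^ 2) = Vf :=
    funext fun x => Real.sq_sqrt (hVfnn x)
  have eVg : (fun y => Real.sqrt (Vg y) ^ 2) = Vg :=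
    funext fun y => Real.sq_sqrt (hVgnn y)
  rw [eVf, eVg] at hcs2
  have hT2nn : 0 ≤ ∑ x, ∑ y, q x y * Real.sqrt (Vf x) * Real.sqrt (Vg y) :=
    Finset.sum_nonneg fun x _ => Finset.sum_nonneg fun y _ =>
      mul_nonneg (mul_nonneg (hq0 x y) (Real.sqrt_nonneg _)) (Real.sqrt_nonneg _)
  have hT2 : (∑ x, ∑ y, q x y * Real.sqrt (Vf x) * Real.sqrt (Vg y))
      ≤ Real.sqrt (expec (margA q) Vf) * Real.sqrt (expec (margB q) Vg) := by
    have h1 : (∑ x, ∑ y, q x y * Real.sqrt (Vf x) * Real.sqrt (Vg y))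
        ≤ Real.sqrt (expec (margA q) Vf * expec (margB q) Vg) := by
      have h2 := Real.sqrt_le_sqrt hcs2
      rwa [Real.sqrt_sq hT2nn] at h2
    rwa [Real.sqrt_mul hc2nn] at h1
  -- mean part via maximal correlation of q
  have hT1 : (∑ x, ∑ y, q x y * F x * G y)
      ≤ maxCorr q * Real.sqrt (expec (margA q) (fun x => F x ^ 2))
        * Real.sqrt (expec (margB q) (fun y => G y ^ 2)) := by
    have h := condexp_bound q hq0 hq1 F G
    have hpa : pVar (margA q) F = expec (margA q) (fun x => F x ^ 2) := by
      unfold pVar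
      rw [e0A]
      ring
    have hpb : pVar (margB q) G = expec (margB q) (fun y => G y ^ 2) := by
      unfold pVar
      rw [e0B]
      ring
    rw [e0A, e0B, hpa, hpb] at h
    linarith only [h]
  -- put everything together
  show (∑ ax : A × X, ∑ bY : B × Y,
      (q ax.2 bY.2 * p ax.2 bY.2 ax.1 bY.1) * f ax * g bY) ≤ max (maxCorr q) M2
  have hsplit : (∑ ax : A × X, ∑ bY : B × Y,
      (q ax.2 bY.2 * p ax.2 bY.2 ax.1 bY.1) * f ax * g bY)
      = ∑ x, ∑ y, q x y * ∑ a, ∑ b, p x y a b * f (a, x) * g (b, y) := by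
    have h4 : (∑ ax : A × X, ∑ bY : B × Y,
        (q ax.2 bY.2 * p ax.2 bY.2 ax.1 bY.1) * f ax * g bY)
        = ∑ x, ∑ y, ∑ a, ∑ b, q x y * p x y a b * f (a, x) * g (b, y) :=
      sum4 (fun a x b y => q x y * p x y a b * f (a, x) * g (b, y))
    rw [h4]
    refine Finset.sum_congr rfl fun x _ => Finset.sum_congr rfl fun y _ => ?_
    rw [Finset.mul_sum]
    refine Finset.sum_congr rfl fun a _ => ?_
    rw [Finset.mul_sum]
    exact Finset.sum_congr rfl fun b _ => by ring
  rw [hsplit]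
  have step1 : (∑ x, ∑ y, q x y * ∑ a, ∑ b, p x y a b * f (a, x) * g (b, y))
      ≤ ∑ x, ∑ y, q x y * (F x * G y + M2 * (Real.sqrt (Vf x) * Real.sqrt (Vg y))) :=
    Finset.sum_le_sum fun x _ => Finset.sum_le_sum fun y _ =>
      mul_le_mul_of_nonneg_left (key x y) (hq0 x y)
  have step2 : (∑ x, ∑ y, q x y * (F x * G y + M2 * (Real.sqrt (Vf x) * Real.sqrt (Vg y))))
      = (∑ x, ∑ y, q x y * F x * G y)
        + M2 * ∑ x, ∑ y, q x y * Real.sqrt (Vf x) * Real.sqrt (Vg y) := by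
    have hinner : ∀ x, (∑ y, q x y * (F x * G y + M2 * (Real.sqrt (Vf x) * Real.sqrt (Vg y))))
        = (∑ y, q x y * F x * G y)
          + M2 * ∑ y, q x y * Real.sqrt (Vf x) * Real.sqrt (Vg y) := by
      intro x
      rw [← sum_split (fun y => q x y * F x * G y)
        (fun y => q x y * Real.sqrt (Vf x) * Real.sqrt (Vg y)) M2]
      exact Finset.sum_congr rfl fun y _ => by ring
    calc (∑ x, ∑ y, q x y * (F x * G y + M2 * (Real.sqrt (Vf x) * Real.sqrt (Vg y))))
        = ∑ x, ((∑ y, q x y * F x * G y)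
            + M2 * ∑ y, q x y * Real.sqrt (Vf x) * Real.sqrt (Vg y)) :=
          Finset.sum_congr rfl fun x _ => hinner x
      _ = _ := sum_split _ _ M2
  -- final numeric bound
  set sa := Real.sqrt (expec (margA q) (fun x => F x ^ 2)) with hsa
  set sb := Real.sqrt (expec (margB q) (fun y => G y ^ 2)) with hsb
  set sc := Real.sqrt (expec (margA q) Vf) with hsc
  set sd := Real.sqrt (expec (margB q) Vg) with hsd
  have hsa2 : sa ^ 2 = expec (margA q) (fun x => F x ^ 2) := Real.sq_sqrt ha2nn
  have hsb2 : sb ^ 2 = expec (margB q) (fun y => G y ^ 2) := Real.sq_sqrt hb2nn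
  have hsc2 : sc ^ 2 = expec (margA q) Vf := Real.sq_sqrt hc2nn
  have hsd2 : sd ^ 2 = expec (margB q) Vg := Real.sq_sqrt hd2nn
  have hsa0 : 0 ≤ sa := Real.sqrt_nonneg _
  have hsb0 : 0 ≤ sb := Real.sqrt_nonneg _
  have hsc0 : 0 ≤ sc := Real.sqrt_nonneg _
  have hsd0 : 0 ≤ sd := Real.sqrt_nonneg _
  have hs1 : sa * sb + sc * sd ≤ 1 := by
    have hid : (sa * sb + sc * sd) ^ 2 + (sa * sd - sc * sb) ^ 2
        = (sa ^ 2 + sc ^ 2) * (sb ^ 2 + sd ^ 2) := by ring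
    have hsum1 : sa ^ 2 + sc ^ 2 = 1 := by rw [hsa2, hsc2]; exact hacsum
    have hsum2 : sb ^ 2 + sd ^ 2 = 1 := by rw [hsb2, hsd2]; exact hbdsum
    rw [hsum1, hsum2, one_mul] at hid
    have hsq1 : (sa * sb + sc * sd) ^ 2 ≤ 1 := by
      have h6 := sq_nonneg (sa * sd - sc * sb)
      linarith only [hid, h6]
    have h7 := sq_nonneg (sa * sb + sc * sd - 1)
    linarith only [hsq1, h7]
  have hfin : maxCorr q * sa * sb + M2 * (sc * sd) ≤ max (maxCorr q) M2 := by
    have h1 : maxCorr q * (sa * sb) ≤ max (maxCorr q) M2 * (sa * sb) :=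
      mul_le_mul_of_nonneg_right (le_max_left _ _) (mul_nonneg hsa0 hsb0)
    have h2 : M2 * (sc * sd) ≤ max (maxCorr q) M2 * (sc * sd) :=
      mul_le_mul_of_nonneg_right (le_max_right _ _) (mul_nonneg hsc0 hsd0)
    have h3 : max (maxCorr q) M2 * (sa * sb + sc * sd) ≤ max (maxCorr q) M2 * 1 :=
      mul_le_mul_of_nonneg_left hs1 hMnn
    have h4 : max (maxCorr q) M2 * (sa * sb) + max (maxCorr q) M2 * (sc * sd)
        = max (maxCorr q) M2 * (sa * sb + sc * sd) := by ring
    have h5 : maxCorr q * sa * sb = maxCorr q * (sa * sb) := by ring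
    rw [mul_one] at h3
    linarith only [h1, h2, h3, h4, h5]
  have hM2T2 : M2 * (∑ x, ∑ y, q x y * Real.sqrt (Vf x) * Real.sqrt (Vg y))
      ≤ M2 * (sc * sd) := mul_le_mul_of_nonneg_left hT2 hM2nn
  calc (∑ x, ∑ y, q x y * ∑ a, ∑ b, p x y a b * f (a, x) * g (b, y))
      ≤ ∑ x, ∑ y, q x y * (F x * G y + M2 * (Real.sqrt (Vf x) * Real.sqrt (Vg y))) := step1
    _ = (∑ x, ∑ y, q x y * F x * G y)
        + M2 * ∑ x, ∑ y, q x y * Real.sqrt (Vf x) * Real.sqrt (Vg y) := step2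
    _ ≤ maxCorr q * sa * sb + M2 * (sc * sd) := add_le_add hT1 hM2T2
    _ ≤ max (maxCorr q) M2 := hfin

end Main
end
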